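/- arXiv:2401.05649 — 7 statements merged into one kernel-verified Lean document; each statement's English description precedes it below -/
import Mathlib

section
/- Let λ ∈ ℝ and let y be a solution of -(p y')' + q y = λ w y on [a,b] with y(x) > 0 for every x ∈ [a,b]. Let η : [a,b] → ℝ be absolutely continuous with derivative η', with η(a) = η(b) = 0, ∫_a^b p (η')² dt < ∞ and ∫_a^b |q| η² dt < ∞. Then g := η/y is absolutely continuous with derivative g' = (η' y − η y')/y², and the ground-state transform identity holds: ∫_a^b ( p(x) η'(x)² + q(x) η(x)² ) dx = ∫_a^b p(x) y(x)² g'(x)² dx + λ ∫_a^b w(x) η(x)² dx. -/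
set_option maxHeartbeats 1000000


open MeasureTheory Set

/-- `f` is absolutely continuous on `[a,b]` with (integrable) derivative `f'`:
`f x = f a + ∫_a^x f'` for all `x ∈ [a,b]`. -/
def ACDeriv (a b : ℝ) (f f' : ℝ → ℝ) : Prop :=
  IntegrableOn f' (Icc a b) ∧ ∀ x ∈ Icc a b, f x = f a + ∫ t in a..x, f' t

/-- `y` (with derivative `y'`) is a solution of `-(p y')' + q y = λ w y` on `[a,b]`:
`y` is absolutely continuous with derivative `y'`, and `p·y'` is absolutely continuous
with derivative `(q - λ w) y`. -/
def SLSolution (a b lam : ℝ) (p q w y y' : ℝ → ℝ) : Prop :=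
  ACDeriv a b y y' ∧
  ACDeriv a b (fun x => p x * y' x) (fun x => (q x - lam * w x) * y x)


theorem ACDeriv.continuousOn {a b : ℝ} {f f' : ℝ → ℝ} (h : ACDeriv a b f f') :
    ContinuousOn f (Icc a b) := by
  have h1 : ContinuousOn (fun x => f a + ∫ t in Ioc a x, f' t) (Icc a b) :=
    continuousOn_const.add (intervalIntegral.continuousOn_primitive h.1)
  refine h1.congr ?_
  intro x hx
  rw [h.2 x hx, intervalIntegral.integral_of_le hx.1]

theorem ACDeriv.exists_bound {a b : ℝ} {f f' : ℝ → ℝ} (h : ACDeriv a b f f') :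
    ∃ C : ℝ, ∀ x ∈ Icc a b, ‖f x‖ ≤ C :=
  isCompact_Icc.exists_bound_of_continuousOn h.continuousOn

theorem ACDeriv.aesm {a b : ℝ} {f f' : ℝ → ℝ} (h : ACDeriv a b f f') :
    AEStronglyMeasurable f (volume.restrict (Icc a b)) :=
  h.continuousOn.aestronglyMeasurable measurableSet_Icc

theorem ACDeriv.congr {a b : ℝ} {f f' g g' : ℝ → ℝ} (h : ACDeriv a b f f')
    (h1 : ∀ x, f x = g x) (h2 : ∀ x, f' x = g' x) : ACDeriv a b g g' := by
  have e1 : f = g := funext h1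
  have e2 : f' = g' := funext h2
  rw [← e1, ← e2]
  exact h

/-- integrable times bounded (on s) a.e.-measurable function is integrable, both orders -/
theorem integrable_mul_bdd {s : Set ℝ} (hs : MeasurableSet s) {f g : ℝ → ℝ}
    (hf : IntegrableOn f s) (hg : AEStronglyMeasurable g (volume.restrict s))
    {C : ℝ} (hC : ∀ x ∈ s, ‖g x‖ ≤ C) :
    IntegrableOn (fun x => f x * g x) s ∧ IntegrableOn (fun x => g x * f x) s := by
  have h2 : IntegrableOn (fun x => g x * f x) s := by
    refine Integrable.bdd_mul (c := C) hf hg ?_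
    filter_upwards [ae_restrict_mem hs] with x hx using hC x hx
  exact ⟨h2.congr_fun (fun x _ => mul_comm _ _) hs, h2⟩

theorem fubini_primitive (a x : ℝ) (f' g' : ℝ → ℝ)
    (hf' : IntegrableOn f' (Ioc a x)) (hg' : IntegrableOn g' (Ioc a x)) :
    (∫ s in Ioc a x, f' s * ∫ t in Ioc a s, g' t) +
      (∫ t in Ioc a x, (∫ s in Ioc a t, f' s) * g' t) =
    (∫ s in Ioc a x, f' s) * (∫ t in Ioc a x, g' t) := by
  set μ := volume.restrict (Ioc a x) with hμ
  set Φ : ℝ × ℝ → ℝ := fun z => f' z.1 * g' z.2 with hΦdef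
  have hΦ : Integrable Φ (μ.prod μ) := Integrable.mul_prod hf' hg'
  have hI : Integrable ({z : ℝ × ℝ | z.2 ≤ z.1}.indicator Φ) (μ.prod μ) :=
    hΦ.indicator (measurableSet_le measurable_snd measurable_fst)
  have hJ : Integrable ({z : ℝ × ℝ | z.1 < z.2}.indicator Φ) (μ.prod μ) :=
    hΦ.indicator (measurableSet_lt measurable_fst measurable_snd)
  have hsum : ∀ z : ℝ × ℝ, ({z : ℝ × ℝ | z.2 ≤ z.1}.indicator Φ) z
      + ({z : ℝ × ℝ | z.1 < z.2}.indicator Φ) z = Φ z := by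
    intro z
    simp only [Set.indicator_apply, mem_setOf_eq]
    by_cases h : z.2 ≤ z.1
    · simp [h, not_lt.2 h]
    · simp [h, lt_of_not_ge h]
  have h1 : ∫ z, ({z : ℝ × ℝ | z.2 ≤ z.1}.indicator Φ) z ∂(μ.prod μ)
      = ∫ s in Ioc a x, f' s * ∫ t in Ioc a s, g' t := by
    rw [MeasureTheory.integral_prod _ hI]
    refine integral_congr_ae ?_
    filter_upwards [ae_restrict_mem measurableSet_Ioc] with s hs
    have : ∀ t : ℝ, ({z : ℝ × ℝ | z.2 ≤ z.1}.indicator Φ) (s, t)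
        = (Iic s).indicator (fun t => f' s * g' t) t := by
      intro t
      simp only [Set.indicator_apply, mem_setOf_eq, mem_Iic]
      rfl
    simp_rw [this]
    rw [MeasureTheory.integral_indicator measurableSet_Iic, hμ,
      Measure.restrict_restrict measurableSet_Iic]
    have : Iic s ∩ Ioc a x = Ioc a s := by
      ext t; simp only [mem_inter_iff, mem_Iic, mem_Ioc]
      constructor
      · rintro ⟨h1, h2, h3⟩; exact ⟨h2, h1⟩
      · rintro ⟨h1, h2⟩; exact ⟨h2, h1, h2.trans hs.2⟩
    rw [this, MeasureTheory.integral_const_mul]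
  have h2 : ∫ z, ({z : ℝ × ℝ | z.1 < z.2}.indicator Φ) z ∂(μ.prod μ)
      = ∫ t in Ioc a x, (∫ s in Ioc a t, f' s) * g' t := by
    rw [MeasureTheory.integral_prod_symm _ hJ]
    refine integral_congr_ae ?_
    filter_upwards [ae_restrict_mem measurableSet_Ioc] with t ht
    have : ∀ s : ℝ, ({z : ℝ × ℝ | z.1 < z.2}.indicator Φ) (s, t)
        = (Iio t).indicator (fun s => f' s * g' t) s := by
      intro s
      simp only [Set.indicator_apply, mem_setOf_eq, mem_Iio]
      rfl
    simp_rw [this]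
    rw [MeasureTheory.integral_indicator measurableSet_Iio, hμ,
      Measure.restrict_restrict measurableSet_Iio]
    have : Iio t ∩ Ioc a x = Ioo a t := by
      ext s; simp only [mem_inter_iff, mem_Iio, mem_Ioc]
      constructor
      · rintro ⟨h1, h2, h3⟩; exact ⟨h2, h1⟩
      · rintro ⟨h1, h2⟩; exact ⟨h2, h1, h2.le.trans ht.2⟩
    rw [this, MeasureTheory.integral_mul_const, ← MeasureTheory.integral_Ioc_eq_integral_Ioo]
  rw [← h1, ← h2, ← integral_add hI hJ]
  simp_rw [hsum]
  exact MeasureTheory.integral_prod_mul f' g'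

/-- Product rule for absolutely continuous functions. -/
theorem ACDeriv.mul {a b : ℝ} {f f' g g' : ℝ → ℝ}
    (hf : ACDeriv a b f f') (hg : ACDeriv a b g g') :
    ACDeriv a b (fun x => f x * g x) (fun x => f' x * g x + f x * g' x) := by
  obtain ⟨Cf, hCf⟩ := hf.exists_bound
  obtain ⟨Cg, hCg⟩ := hg.exists_bound
  have hf'g : IntegrableOn (fun x => g x * f' x) (Icc a b) :=
    (integrable_mul_bdd measurableSet_Icc hf.1 hg.aesm hCg).2
  have hfg' : IntegrableOn (fun x => f x * g' x) (Icc a b) :=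
    (integrable_mul_bdd measurableSet_Icc hg.1 hf.aesm hCf).2
  constructor
  · exact (hf'g.congr_fun (fun x _ => mul_comm _ _) measurableSet_Icc).add hfg'
  · intro x hx
    have hax : a ≤ x := hx.1
    have hsub : Ioc a x ⊆ Icc a b := fun t ht => ⟨ht.1.le, ht.2.trans hx.2⟩
    have hf'x : IntegrableOn f' (Ioc a x) := hf.1.mono_set hsub
    have hg'x : IntegrableOn g' (Ioc a x) := hg.1.mono_set hsub
    set F : ℝ → ℝ := fun s => ∫ t in Ioc a s, f' t with hFdef
    set G : ℝ → ℝ := fun s => ∫ t in Ioc a s, g' t with hGdef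
    have hFcont : ContinuousOn F (Icc a b) := intervalIntegral.continuousOn_primitive hf.1
    have hGcont : ContinuousOn G (Icc a b) := intervalIntegral.continuousOn_primitive hg.1
    obtain ⟨CF, hCF⟩ := isCompact_Icc.exists_bound_of_continuousOn hFcont
    obtain ⟨CG, hCG⟩ := isCompact_Icc.exists_bound_of_continuousOn hGcont
    have hfs : ∀ s ∈ Icc a b, f s = f a + F s := fun s hs => by
      rw [hf.2 s hs, intervalIntegral.integral_of_le hs.1]
    have hgs : ∀ s ∈ Icc a b, g s = g a + G s := fun s hs => by
      rw [hg.2 s hs, intervalIntegral.integral_of_le hs.1]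
    have hGae : AEStronglyMeasurable G (volume.restrict (Ioc a x)) :=
      (hGcont.mono hsub).aestronglyMeasurable measurableSet_Ioc
    have hFae : AEStronglyMeasurable F (volume.restrict (Ioc a x)) :=
      (hFcont.mono hsub).aestronglyMeasurable measurableSet_Ioc
    have if'G : IntegrableOn (fun t => f' t * G t) (Ioc a x) :=
      (integrable_mul_bdd measurableSet_Ioc hf'x hGae (fun t ht => hCG t (hsub ht))).1
    have iFg' : IntegrableOn (fun t => F t * g' t) (Ioc a x) :=
      (integrable_mul_bdd measurableSet_Ioc hg'x hFae (fun t ht => hCF t (hsub ht))).2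
    have key := fubini_primitive a x f' g' hf'x hg'x
    have e0 : EqOn (fun t => f' t * g t + f t * g' t)
        (fun t => (g a * f' t + f' t * G t) + (f a * g' t + F t * g' t)) (Ioc a x) := by
      intro t ht
      simp only
      rw [hfs t (hsub ht), hgs t (hsub ht)]
      ring
    have i1 : IntegrableOn (fun t => g a * f' t + f' t * G t) (Ioc a x) :=
      (hf'x.const_mul (g a)).add if'G
    have i2 : IntegrableOn (fun t => f a * g' t + F t * g' t) (Ioc a x) :=
      (hg'x.const_mul (f a)).add iFg'
    have i3 : IntegrableOn (fun t => g a * f' t) (Ioc a x) := hf'x.const_mul (g a)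
    have i4 : IntegrableOn (fun t => f a * g' t) (Ioc a x) := hg'x.const_mul (f a)
    have estep : (∫ t in a..x, (f' t * g t + f t * g' t)) = f x * g x - f a * g a := by
      rw [intervalIntegral.integral_of_le hax, setIntegral_congr_fun measurableSet_Ioc e0,
        integral_add i1 i2, integral_add i3 if'G, integral_add i4 iFg',
        MeasureTheory.integral_const_mul, MeasureTheory.integral_const_mul]
      rw [hfs x hx, hgs x hx]
      linear_combination key
    have : (∫ t in a..x, (f' t * g t + f t * g' t)) = f x * g x - f a * g a := estep
    simp only
    linarith [this]

theorem ACDeriv.pow {a b : ℝ} {f f' : ℝ → ℝ} (h : ACDeriv a b f f') (n : ℕ) :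
    ACDeriv a b (fun x => f x ^ (n + 1)) (fun x => ((n : ℝ) + 1) * f x ^ n * f' x) := by
  induction n with
  | zero => exact h.congr (fun x => by ring) (fun x => by push_cast; ring)
  | succ n ih =>
    exact (ih.mul h).congr (fun x => by ring) (fun x => by push_cast; ring)


theorem gronwall_zero {a b : ℝ} (hab : a ≤ b) {h v : ℝ → ℝ}
    (hh : IntegrableOn h (Icc a b)) (hvc : ContinuousOn v (Icc a b))
    (hv : ∀ x ∈ Icc a b, v x = ∫ t in a..x, h t * v t) :
    ∀ x ∈ Icc a b, v x = 0 := by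
  obtain ⟨M, hM⟩ := isCompact_Icc.exists_bound_of_continuousOn hvc
  have hM0 : 0 ≤ M := le_trans (norm_nonneg _) (hM a ⟨le_rfl, hab⟩)
  set K : ℝ → ℝ := fun s => ∫ t in Ioc a s, |h t| with hKdef
  have hKac : ACDeriv a b K (fun t => |h t|) := by
    refine ⟨hh.abs, fun x hx => ?_⟩
    rw [intervalIntegral.integral_of_le hx.1]
    simp [hKdef]
  have hKnonneg : ∀ s, 0 ≤ K s := fun s =>
    setIntegral_nonneg measurableSet_Ioc fun t _ => abs_nonneg _
  have hKb : ∀ s ∈ Icc a b, K s ≤ K b := by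
    intro s hs
    refine setIntegral_mono_set ((hh.mono_set Ioc_subset_Icc_self).abs)
      (ae_of_all _ fun t => abs_nonneg _) ?_
    exact HasSubset.Subset.eventuallyLE (Ioc_subset_Ioc_right hs.2)
  have hvb : AEStronglyMeasurable v (volume.restrict (Icc a b)) :=
    hvc.aestronglyMeasurable measurableSet_Icc
  have hhv : IntegrableOn (fun t => h t * v t) (Icc a b) :=
    (integrable_mul_bdd measurableSet_Icc hh hvb hM).1
  have main : ∀ n : ℕ, ∀ x ∈ Icc a b, |v x| ≤ M * K x ^ n / n.factorial := by
    intro n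
    induction n with
    | zero =>
      intro x hx
      simpa using (Real.norm_eq_abs (v x) ▸ hM x hx)
    | succ n ih =>
      intro x hx
      have hax : a ≤ x := hx.1
      have hsub : Ioc a x ⊆ Icc a b := fun t ht => ⟨ht.1.le, ht.2.trans hx.2⟩
      have hKcont : ContinuousOn K (Icc a b) := hKac.continuousOn
      obtain ⟨CK, hCK⟩ : ∃ C : ℝ, ∀ s ∈ Icc a b, ‖K s ^ n * (M / n.factorial)‖ ≤ C :=
        isCompact_Icc.exists_bound_of_continuousOn ((hKcont.pow n).mul continuousOn_const)
      have hKa : K a = 0 := by simp [hKdef]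
      have hpowint : (∫ t in Ioc a x, K t ^ n * |h t|) = K x ^ (n + 1) / ((n : ℝ) + 1) := by
        have hpow := (hKac.pow n).2 x hx
        simp only at hpow
        rw [intervalIntegral.integral_of_le hax] at hpow
        have hconst : (∫ t in Ioc a x, ((n : ℝ) + 1) * K t ^ n * |h t|)
            = ((n : ℝ) + 1) * ∫ t in Ioc a x, K t ^ n * |h t| := by
          simp_rw [mul_assoc]
          exact MeasureTheory.integral_const_mul _ _
        rw [hconst, hKa, zero_pow (Nat.succ_ne_zero n), zero_add] at hpow
        have hn1 : ((n : ℝ) + 1) ≠ 0 := by positivity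
        rw [eq_div_iff hn1]
        linarith [hpow]
      have hKaem : AEStronglyMeasurable (fun t => K t ^ n * (M / n.factorial))
          (volume.restrict (Ioc a x)) :=
        (((hKcont.pow n).mul continuousOn_const).mono hsub).aestronglyMeasurable measurableSet_Ioc
      have habs : IntegrableOn (fun t => |h t|) (Ioc a x) := (hh.mono_set hsub).abs
      have irhs : IntegrableOn (fun t => |h t| * (K t ^ n * (M / n.factorial))) (Ioc a x) :=
        (integrable_mul_bdd measurableSet_Ioc habs hKaem (fun t ht => hCK t (hsub ht))).1
      have ilhs0 : IntegrableOn (fun t => |h t * v t|) (Ioc a x) := (hhv.mono_set hsub).abs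
      have ilhs : IntegrableOn (fun t => |h t| * |v t|) (Ioc a x) :=
        ilhs0.congr_fun (fun t _ => abs_mul _ _) measurableSet_Ioc
      calc |v x| = |∫ t in Ioc a x, h t * v t| := by
            rw [hv x hx, intervalIntegral.integral_of_le hax]
        _ ≤ ∫ t in Ioc a x, |h t| * |v t| := by
            simpa [Real.norm_eq_abs, abs_mul] using
              MeasureTheory.norm_integral_le_integral_norm
                (μ := volume.restrict (Ioc a x)) (fun t => h t * v t)
        _ ≤ ∫ t in Ioc a x, |h t| * (K t ^ n * (M / n.factorial)) := by
            refine setIntegral_mono_on ilhs irhs measurableSet_Ioc ?_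
            intro t ht
            have h1 := ih t (hsub ht)
            have h2 : M * K t ^ n / n.factorial = K t ^ n * (M / n.factorial) := by ring
            exact mul_le_mul_of_nonneg_left (h2 ▸ h1) (abs_nonneg _)
        _ = (M / n.factorial) * ∫ t in Ioc a x, K t ^ n * |h t| := by
            rw [← MeasureTheory.integral_const_mul]
            congr 1
            funext t
            ring
        _ = M * K x ^ (n + 1) / (n + 1).factorial := by
            rw [hpowint, div_mul_div_comm, Nat.factorial_succ]
            push_cast
            rw [mul_comm ((n.factorial : ℝ)) _]
  intro x hx
  have hbound : ∀ n : ℕ, |v x| ≤ M * (K b ^ n / n.factorial) := by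
    intro n
    refine (main n x hx).trans ?_
    rw [mul_div_assoc]
    gcongr
    · exact hKb x hx
  have htend : Filter.Tendsto (fun n : ℕ => M * (K b ^ n / n.factorial))
      Filter.atTop (nhds 0) := by
    have := FloorSemiring.tendsto_pow_div_factorial_atTop (K b)
    simpa using this.const_mul M
  have : |v x| ≤ 0 := ge_of_tendsto htend (Filter.Eventually.of_forall hbound)
  exact abs_eq_zero.1 (le_antisymm this (abs_nonneg _))

theorem ACDeriv.inv {a b : ℝ} (hab : a ≤ b) {y y' : ℝ → ℝ} (hy : ACDeriv a b y y')
    (hpos : ∀ x ∈ Icc a b, 0 < y x) :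
    ACDeriv a b (fun x => (y x)⁻¹) (fun x => -(y' x) / y x ^ 2) := by
  obtain ⟨m, hm, hmin⟩ := isCompact_Icc.exists_isMinOn (nonempty_Icc.2 hab) hy.continuousOn
  have hε : 0 < y m := hpos m hm
  have hlow : ∀ x ∈ Icc a b, y m ≤ y x := fun x hx => hmin hx
  have hyne : ∀ x ∈ Icc a b, y x ≠ 0 := fun x hx => (hpos x hx).ne'
  -- continuity / measurability helpers
  have hicont : ContinuousOn (fun x => (y x)⁻¹) (Icc a b) :=
    hy.continuousOn.inv₀ hyne
  have hibound : ∀ x ∈ Icc a b, ‖(y x)⁻¹‖ ≤ (y m)⁻¹ := by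
    intro x hx
    rw [Real.norm_eq_abs, abs_of_pos (inv_pos.2 (hpos x hx))]
    exact one_div (y x) ▸ one_div (y m) ▸ one_div_le_one_div_of_le hε (hlow x hx)
  have hi2cont : ContinuousOn (fun x => -((y x ^ 2)⁻¹)) (Icc a b) :=
    ((hy.continuousOn.pow 2).inv₀ fun x hx => pow_ne_zero _ (hyne x hx)).neg
  have hi2bound : ∀ x ∈ Icc a b, ‖-((y x ^ 2)⁻¹)‖ ≤ (y m ^ 2)⁻¹ := by
    intro x hx
    rw [Real.norm_eq_abs, abs_neg, abs_of_pos (inv_pos.2 (pow_pos (hpos x hx) 2))]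
    exact one_div (y x ^ 2) ▸ one_div (y m ^ 2) ▸
      one_div_le_one_div_of_le (pow_pos hε 2)
        (pow_le_pow_left₀ hε.le (hlow x hx) 2)
  -- the candidate derivative is integrable
  have hu'int : IntegrableOn (fun x => -(y' x) / y x ^ 2) (Icc a b) := by
    have h0 : IntegrableOn (fun x => y' x * (-((y x ^ 2)⁻¹))) (Icc a b) :=
      (integrable_mul_bdd measurableSet_Icc hy.1
        (hi2cont.aestronglyMeasurable measurableSet_Icc) hi2bound).1
    exact h0.congr_fun (fun x _ => by ring) measurableSet_Icc
  set u : ℝ → ℝ := fun x => (y a)⁻¹ + ∫ t in Ioc a x, -(y' t) / y t ^ 2 with hu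
  have hua : u a = (y a)⁻¹ := by simp [hu]
  have huac : ACDeriv a b u (fun x => -(y' x) / y x ^ 2) := by
    refine ⟨hu'int, fun x hx => ?_⟩
    rw [intervalIntegral.integral_of_le hx.1]
    simp [hu]
  have hyu := hy.mul huac
  set v : ℝ → ℝ := fun x => y x * u x - 1 with hv
  have hva : v a = 0 := by
    simp only [hv, hua]
    rw [mul_inv_cancel₀ (hyne a ⟨le_rfl, hab⟩)]
    ring
  have hvc : ContinuousOn v (Icc a b) :=
    (hy.continuousOn.mul huac.continuousOn).sub continuousOn_const
  have hhint : IntegrableOn (fun t => y' t / y t) (Icc a b) := by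
    have h0 : IntegrableOn (fun t => y' t * (y t)⁻¹) (Icc a b) :=
      (integrable_mul_bdd measurableSet_Icc hy.1
        (hicont.aestronglyMeasurable measurableSet_Icc) hibound).1
    exact h0.congr_fun (fun x _ => by rw [div_eq_mul_inv]) measurableSet_Icc
  have hveq : ∀ x ∈ Icc a b, v x = ∫ t in a..x, (y' t / y t) * v t := by
    intro x hx
    have h1 := hyu.2 x hx
    simp only at h1
    have h2 : (∫ t in a..x, (y' t * u t + y t * (-(y' t) / y t ^ 2)))
        = ∫ t in a..x, (y' t / y t) * v t := by
      refine intervalIntegral.integral_congr fun t ht => ?_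
      have ht' : t ∈ Icc a b := by
        rw [uIcc_of_le hx.1] at ht
        exact ⟨ht.1, ht.2.trans hx.2⟩
      have h0 := hyne t ht'
      simp only [hv]
      field_simp
      ring
    have h3 : y a * u a = 1 := by
      rw [hua, mul_inv_cancel₀ (hyne a ⟨le_rfl, hab⟩)]
    calc v x = y x * u x - 1 := rfl
      _ = (y a * u a + ∫ t in a..x, (y' t * u t + y t * (-(y' t) / y t ^ 2))) - 1 := by
          rw [← h1]
      _ = ∫ t in a..x, (y' t * u t + y t * (-(y' t) / y t ^ 2)) := by
          rw [h3, add_sub_cancel_left]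
      _ = ∫ t in a..x, (y' t / y t) * v t := h2
  have hz := gronwall_zero hab hhint hvc hveq
  have huy : ∀ x ∈ Icc a b, u x = (y x)⁻¹ := by
    intro x hx
    have h0 := hz x hx
    simp only [hv, sub_eq_zero] at h0
    field_simp [hyne x hx]
    linear_combination h0
  refine ⟨hu'int, fun x hx => ?_⟩
  show (y x)⁻¹ = (y a)⁻¹ + ∫ t in a..x, -(y' t) / y t ^ 2
  rw [← huy x hx, ← hua]
  exact huac.2 x hx

/-- Ground-state transform identity on a single edge `[a,b]`. -/
theorem ground_state_transform (a b : ℝ) (hab : a < b)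
    (p q w : ℝ → ℝ) (hpm : Measurable p) (hqm : Measurable q) (hwm : Measurable w)
    (hppos : ∀ᵐ x ∂volume, x ∈ Icc a b → 0 < p x)
    (hwpos : ∀ᵐ x ∂volume, x ∈ Icc a b → 0 ≤ w x)
    (hpint : IntegrableOn (fun x => 1 / p x) (Icc a b))
    (hqint : IntegrableOn q (Icc a b))
    (hwint : IntegrableOn w (Icc a b))
    (lam : ℝ) (y y' : ℝ → ℝ)
    (hy : SLSolution a b lam p q w y y')
    (hypos : ∀ x ∈ Icc a b, 0 < y x)
    (η η' : ℝ → ℝ) (hη : ACDeriv a b η η')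
    (hηa : η a = 0) (hηb : η b = 0)
    (hηp : IntegrableOn (fun t => p t * η' t ^ 2) (Icc a b))
    (hηq : IntegrableOn (fun t => |q t| * η t ^ 2) (Icc a b)) :
    ACDeriv a b (fun x => η x / y x)
      (fun x => (η' x * y x - η x * y' x) / (y x) ^ 2) ∧
    (∫ x in a..b, (p x * η' x ^ 2 + q x * η x ^ 2)) =
      (∫ x in a..b,
        p x * y x ^ 2 * ((η' x * y x - η x * y' x) / (y x) ^ 2) ^ 2)
      + lam * ∫ x in a..b, w x * η x ^ 2 := by
  obtain ⟨hyac, hPy⟩ := hy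
  have hab' : a ≤ b := hab.le
  have hyinv := hyac.inv hab' hypos
  -- Part 1 : the quotient rule
  have hgmul := hη.mul hyinv
  have hg : ACDeriv a b (fun x => η x / y x)
      (fun x => (η' x * y x - η x * y' x) / (y x) ^ 2) := by
    refine hgmul.congr (fun x => (div_eq_mul_inv _ _).symm) (fun x => ?_)
    by_cases h0 : y x = 0
    · simp [h0]
    · field_simp
      ring
  -- Part 2
  have hF := hPy.mul (hη.mul (hη.mul hyinv))
  have toII : ∀ {f : ℝ → ℝ}, IntegrableOn f (Icc a b) → IntervalIntegrable f volume a b := by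
    intro f hf
    rw [intervalIntegrable_iff_integrableOn_Ioc_of_le hab']
    exact hf.mono_set Ioc_subset_Icc_self
  -- the boundary term vanishes
  have hb2 := hF.2 b (right_mem_Icc.2 hab')
  simp only [hηa, hηb, zero_mul, mul_zero, zero_add] at hb2
  -- hb2 : 0 = ∫ F'
  -- pointwise identity
  have hpt : ∀ x ∈ Icc a b,
      p x * η' x ^ 2 + q x * η x ^ 2
        = p x * y x ^ 2 * ((η' x * y x - η x * y' x) / (y x) ^ 2) ^ 2
          + ((((q x - lam * w x) * y x) * (η x * (η x * (y x)⁻¹))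
              + (p x * y' x) * (η' x * (η x * (y x)⁻¹)
                + η x * (η' x * (y x)⁻¹ + η x * (-(y' x) / y x ^ 2))))
            + lam * (w x * η x ^ 2)) := by
    intro x hx
    have h0 : y x ≠ 0 := (hypos x hx).ne'
    field_simp
    ring
  -- integrability facts
  have hηcont := hη.continuousOn
  have hη2aesm : AEStronglyMeasurable (fun x => η x ^ 2) (volume.restrict (Icc a b)) :=
    (hηcont.pow 2).aestronglyMeasurable measurableSet_Icc
  have hqη : IntegrableOn (fun x => q x * η x ^ 2) (Icc a b) := by
    refine Integrable.mono' hηq (hqm.aestronglyMeasurable.restrict.mul hη2aesm) ?_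
    refine ae_of_all _ fun x => ?_
    rw [Real.norm_eq_abs, abs_mul, abs_of_nonneg (sq_nonneg (η x))]
  obtain ⟨Cη, hCη⟩ := hη.exists_bound
  have hwη : IntegrableOn (fun x => w x * η x ^ 2) (Icc a b) := by
    refine (integrable_mul_bdd measurableSet_Icc hwint hη2aesm (C := Cη ^ 2) ?_).1
    intro x hx
    rw [norm_pow]
    exact pow_le_pow_left₀ (norm_nonneg _) (hCη x hx) 2
  have hB : IntegrableOn (fun x =>
      ((p x * η' x ^ 2 + q x * η x ^ 2)
        - (((q x - lam * w x) * y x) * (η x * (η x * (y x)⁻¹))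
            + (p x * y' x) * (η' x * (η x * (y x)⁻¹)
              + η x * (η' x * (y x)⁻¹ + η x * (-(y' x) / y x ^ 2)))))
        - lam * (w x * η x ^ 2)) (Icc a b) :=
    ((hηp.add hqη).sub hF.1).sub (hwη.const_mul lam)
  have hA : IntegrableOn (fun x =>
      p x * y x ^ 2 * ((η' x * y x - η x * y' x) / (y x) ^ 2) ^ 2) (Icc a b) := by
    refine hB.congr_fun (fun x hx => ?_) measurableSet_Icc
    have := hpt x hx
    linarith
  refine ⟨hg, ?_⟩
  have e1 : (∫ x in a..b, (p x * η' x ^ 2 + q x * η x ^ 2))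
      = ∫ x in a..b,
          (p x * y x ^ 2 * ((η' x * y x - η x * y' x) / (y x) ^ 2) ^ 2
            + ((((q x - lam * w x) * y x) * (η x * (η x * (y x)⁻¹))
              + (p x * y' x) * (η' x * (η x * (y x)⁻¹)
                + η x * (η' x * (y x)⁻¹ + η x * (-(y' x) / y x ^ 2))))
              + lam * (w x * η x ^ 2))) := by
    refine intervalIntegral.integral_congr ?_
    rw [uIcc_of_le hab']
    exact fun x hx => hpt x hx
  rw [e1, intervalIntegral.integral_add (toII hA) ((toII hF.1).add ((toII hwη).const_mul lam)),
    intervalIntegral.integral_add (toII hF.1) ((toII hwη).const_mul lam),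
    intervalIntegral.integral_const_mul, ← hb2, zero_add]
end

section
/- Let p, q, w : ℝ → ℝ be measurable with p(x) > 0 and w(x) ≥ 0 for a.e. x, and with 1/p, q, w locally integrable on ℝ. Let λ ∈ ℝ and suppose there exists y : ℝ → ℝ with y(x) > 0 for all x, y locally absolutely continuous with derivative y', p·y' locally absolutely continuous, and (p y')'(x) = (q(x) − λ w(x)) y(x) for a.e. x ∈ ℝ. Then for every compactly supported locally absolutely continuous η : ℝ → ℝ with ∫_ℝ p (η')² dx < ∞ and ∫_ℝ |q| η² dx < ∞, one has ∫_ℝ ( p(x) η'(x)² + q(x) η(x)² ) dx ≥ λ ∫_ℝ w(x) η(x)² dx. (Part (1) of the Allegretto–Piepenbrink-type theorem in the single-edge case Γ = ℝ.) -/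
open MeasureTheory Set

/-- `f` is locally absolutely continuous on `ℝ` with (locally integrable) derivative `f'`:
`f x = f y + ∫_y^x f'` for all `x, y ∈ ℝ`. -/
def LocACDeriv (f f' : ℝ → ℝ) : Prop :=
  LocallyIntegrable f' volume ∧ ∀ x y : ℝ, f x = f y + ∫ t in y..x, f' t

lemma locInt_ii {f : ℝ → ℝ} (h : LocallyIntegrable f volume) (a b : ℝ) :
    IntervalIntegrable f volume a b :=
  intervalIntegrable_iff.mpr
    ((h.integrableOn_isCompact isCompact_uIcc).mono_set uIoc_subset_uIcc)

lemma LocACDeriv.continuous {f f' : ℝ → ℝ} (h : LocACDeriv f f') : Continuous f := by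
  have : Continuous fun x => f 0 + ∫ t in (0:ℝ)..x, f' t :=
    continuous_const.add (intervalIntegral.continuous_primitive (fun a b => locInt_ii h.1 a b) 0)
  exact this.congr (fun x => (h.2 x 0).symm)

lemma locACDeriv_of_base {f f' : ℝ → ℝ} (h1 : LocallyIntegrable f' volume)
    (h2 : ∀ x, f x = f 0 + ∫ t in (0:ℝ)..x, f' t) : LocACDeriv f f' := by
  refine ⟨h1, fun x y => ?_⟩
  rw [h2 x, h2 y, add_assoc]
  congr 1
  exact (intervalIntegral.integral_add_adjacent_intervals (locInt_ii h1 0 y)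
    (locInt_ii h1 y x)).symm

lemma prodrule_le {f f' g g' : ℝ → ℝ} (hf : LocACDeriv f f') (hg : LocACDeriv g g')
    {a b : ℝ} (hab : a ≤ b) :
    f b * g b = f a * g a + ∫ t in a..b, (f' t * g t + f t * g' t) := by
  have cf := hf.continuous
  have cg := hg.continuous
  set μI := volume.restrict (Ioc a b) with hμIdef
  have key : ∀ (c k : ℝ → ℝ), LocallyIntegrable c volume → Continuous k →
      Integrable (fun t => c t * k t) μI := fun c k hc hk =>
    ((hc.integrableOn_isCompact isCompact_Icc).mul_continuousOn hk.continuousOn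
      isCompact_Icc).mono_set Ioc_subset_Icc_self
  have keyr : ∀ (c k : ℝ → ℝ), LocallyIntegrable c volume → Continuous k →
      Integrable (fun t => k t * c t) μI := by
    intro c k hc hk
    simpa only [mul_comm] using key c k hc hk
  have hf'I : Integrable f' μI :=
    (hf.1.integrableOn_isCompact isCompact_Icc).mono_set Ioc_subset_Icc_self
  have hg'I : Integrable g' μI :=
    (hg.1.integrableOn_isCompact isCompact_Icc).mono_set Ioc_subset_Icc_self
  set Pf : ℝ → ℝ := fun x => ∫ t in a..x, f' t with hPfdef
  set Pg : ℝ → ℝ := fun x => ∫ t in a..x, g' t with hPgdef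
  have cPf : Continuous Pf :=
    intervalIntegral.continuous_primitive (fun u v => locInt_ii hf.1 u v) a
  have cPg : Continuous Pg :=
    intervalIntegral.continuous_primitive (fun u v => locInt_ii hg.1 u v) a
  -- the two indicator kernels
  set F : ℝ × ℝ → ℝ := fun z => f' z.1 * g' z.2 with hFdef
  set Φ : ℝ × ℝ → ℝ := ({z : ℝ × ℝ | z.2 ≤ z.1}).indicator F with hΦdef
  set Ψ : ℝ × ℝ → ℝ := ({z : ℝ × ℝ | z.1 < z.2}).indicator F with hΨdef
  have mle : MeasurableSet {z : ℝ × ℝ | z.2 ≤ z.1} :=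
    measurableSet_le measurable_snd measurable_fst
  have mlt : MeasurableSet {z : ℝ × ℝ | z.1 < z.2} :=
    measurableSet_lt measurable_fst measurable_snd
  have baseint : Integrable F (μI.prod μI) := hf'I.mul_prod hg'I
  have intΦ : Integrable Φ (μI.prod μI) := baseint.indicator mle
  have intΨ : Integrable Ψ (μI.prod μI) := baseint.indicator mlt
  have addΦΨ : ∀ z : ℝ × ℝ, Φ z + Ψ z = F z := by
    intro z
    by_cases h : z.2 ≤ z.1
    · simp [hΦdef, hΨdef, Set.indicator_apply, h, not_lt.mpr h]
    · simp [hΦdef, hΨdef, Set.indicator_apply, h, lt_of_not_ge h]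
  -- T1
  have hT1 : ∫ t, f' t * Pg t ∂μI = ∫ z, Φ z ∂(μI.prod μI) := by
    have swap : Integrable (Function.uncurry fun t s => Φ (t, s)) (μI.prod μI) := by
      exact intΦ
    rw [show (∫ z, Φ z ∂(μI.prod μI)) = ∫ z, (fun t s => Φ (t, s)) z.1 z.2 ∂(μI.prod μI) from rfl,
      ← integral_integral swap]
    refine setIntegral_congr_fun measurableSet_Ioc (fun t ht => ?_)
    have e1 : ∀ s : ℝ, Φ (t, s) = f' t * (Iic t).indicator g' s := by
      intro s
      simp [hΦdef, hFdef, Set.indicator_apply, mul_ite, mul_zero]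
    have hset : Ioc a b ∩ Iic t = Ioc a t := by
      ext x
      constructor
      · rintro ⟨⟨h1, _⟩, h2⟩; exact ⟨h1, h2⟩
      · rintro ⟨h1, h2⟩; exact ⟨⟨h1, h2.trans ht.2⟩, h2⟩
    calc f' t * Pg t = f' t * ∫ s in Ioc a t, g' s := by
          simp only [hPgdef]
          rw [intervalIntegral.integral_of_le ht.1.le]
      _ = f' t * ∫ s in Ioc a b ∩ Iic t, g' s := by rw [hset]
      _ = f' t * ∫ s, (Iic t).indicator g' s ∂μI := by
          rw [setIntegral_indicator measurableSet_Iic]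
      _ = ∫ s, f' t * (Iic t).indicator g' s ∂μI := (integral_const_mul _ _).symm
      _ = ∫ s, Φ (t, s) ∂μI := by simp_rw [e1]
  -- T2
  have hT2 : ∫ t, g' t * Pf t ∂μI = ∫ z, Ψ z ∂(μI.prod μI) := by
    have e0 : ∫ z, Ψ z ∂(μI.prod μI) = ∫ z, Ψ z.swap ∂(μI.prod μI) :=
      (integral_prod_swap Ψ).symm
    have swap : Integrable (Function.uncurry fun t s => Ψ (s, t)) (μI.prod μI) := by
      have := intΨ.swap
      exact this
    rw [e0,
      show (∫ z, Ψ z.swap ∂(μI.prod μI)) = ∫ z, (fun t s => Ψ (s, t)) z.1 z.2 ∂(μI.prod μI)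
        from rfl,
      ← integral_integral swap]
    refine setIntegral_congr_fun measurableSet_Ioc (fun t ht => ?_)
    have e1 : ∀ s : ℝ, Ψ (s, t) = g' t * (Iio t).indicator f' s := by
      intro s
      simp [hΨdef, hFdef, Set.indicator_apply, mul_ite, mul_zero, mul_comm]
    have hset : Ioc a b ∩ Iio t = Ioo a t := by
      ext x
      constructor
      · rintro ⟨⟨h1, _⟩, h2⟩; exact ⟨h1, h2⟩
      · rintro ⟨h1, h2⟩; exact ⟨⟨h1, h2.le.trans ht.2⟩, h2⟩
    calc g' t * Pf t = g' t * ∫ s in Ioc a t, f' s := by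
          simp only [hPfdef]
          rw [intervalIntegral.integral_of_le ht.1.le]
      _ = g' t * ∫ s in Ioo a t, f' s := by
          congr 1
          exact (setIntegral_congr_set Ioo_ae_eq_Ioc).symm
      _ = g' t * ∫ s in Ioc a b ∩ Iio t, f' s := by rw [hset]
      _ = g' t * ∫ s, (Iio t).indicator f' s ∂μI := by
          rw [setIntegral_indicator measurableSet_Iio]
      _ = ∫ s, g' t * (Iio t).indicator f' s ∂μI := (integral_const_mul _ _).symm
      _ = ∫ s, Ψ (s, t) ∂μI := by simp_rw [e1]
  have claim : (∫ t, f' t * Pg t ∂μI) + (∫ t, g' t * Pf t ∂μI) =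
      (∫ t, f' t ∂μI) * (∫ t, g' t ∂μI) := by
    rw [hT1, hT2, ← integral_add intΦ intΨ]
    simp_rw [addΦΨ]
    exact integral_prod_mul f' g'
  -- expand g and f inside the integral
  have hgrep : ∀ t, g t = g a + Pg t := fun t => hg.2 t a
  have hfrep : ∀ t, f t = f a + Pf t := fun t => hf.2 t a
  have expand : ∫ t in a..b, (f' t * g t + f t * g' t) =
      (g a * ∫ t, f' t ∂μI) + (f a * ∫ t, g' t ∂μI) +
        ((∫ t, f' t * Pg t ∂μI) + (∫ t, g' t * Pf t ∂μI)) := by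
    rw [intervalIntegral.integral_of_le hab]
    have e : ∀ t, f' t * g t + f t * g' t =
        (g a * f' t + f a * g' t) + (f' t * Pg t + g' t * Pf t) := by
      intro t
      rw [hgrep t, hfrep t]; ring
    simp_rw [e]
    have i1 : Integrable (fun x => g a * f' x) μI := hf'I.const_mul (g a)
    have i2 : Integrable (fun x => f a * g' x) μI := hg'I.const_mul (f a)
    have i3 : Integrable (fun x => f' x * Pg x) μI := key f' Pg hf.1 cPg
    have i4 : Integrable (fun x => g' x * Pf x) μI := key g' Pf hg.1 cPf
    have i12 : Integrable (fun x => g a * f' x + f a * g' x) μI := i1.add i2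
    have i34 : Integrable (fun x => f' x * Pg x + g' x * Pf x) μI := i3.add i4
    rw [integral_add i12 i34, integral_add i1 i2, integral_add i3 i4,
      integral_const_mul, integral_const_mul]
  rw [expand, claim]
  have hfb : f b = f a + ∫ t, f' t ∂μI := by
    rw [← intervalIntegral.integral_of_le hab]; exact hf.2 b a
  have hgb : g b = g a + ∫ t, g' t ∂μI := by
    rw [← intervalIntegral.integral_of_le hab]; exact hg.2 b a
  rw [hfb, hgb]; ring

lemma locInt_mul_cont {f g : ℝ → ℝ} (hf : LocallyIntegrable f volume) (hg : Continuous g) :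
    LocallyIntegrable (fun x => f x * g x) volume := by
  rw [locallyIntegrable_iff] at hf ⊢
  exact fun k hk => (hf k hk).mul_continuousOn hg.continuousOn hk

lemma uniq_forward {c ψ : ℝ → ℝ} {a : ℝ} (hc : LocallyIntegrable c volume) (hψ : Continuous ψ)
    (h : ∀ x, ψ x = ∫ t in a..x, c t * ψ t) :
    ∀ x, a ≤ x → ψ x = 0 := by
  have hcψ : LocallyIntegrable (fun t => c t * ψ t) volume := locInt_mul_cont hc hψ
  have habs : LocallyIntegrable (fun t => |c t|) volume := by
    rw [locallyIntegrable_iff] at hc ⊢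
    intro k hk
    simpa [Real.norm_eq_abs, IntegrableOn] using (hc k hk).norm
  have hψa : ψ a = 0 := by rw [h a, intervalIntegral.integral_same]
  have hseg : ∀ u x : ℝ, u ≤ x → ψ u = 0 → ψ x = ∫ t in u..x, c t * ψ t := by
    intro u x hux hu
    rw [h x, ← intervalIntegral.integral_add_adjacent_intervals (locInt_ii hcψ a u)
      (locInt_ii hcψ u x), ← h u, hu, zero_add]
  -- contraction step
  have step : ∀ u v : ℝ, u ≤ v → ψ u = 0 → (∫ t in u..v, |c t|) ≤ 1/2 →
      ∀ x ∈ Icc u v, ψ x = 0 := by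
    intro u v huv hu hsmall
    obtain ⟨m, hm, hmax⟩ := isCompact_Icc.exists_isMaxOn (nonempty_Icc.mpr huv)
      ((continuous_abs.comp hψ).continuousOn)
    have hK : ∀ x ∈ Icc u v, |ψ x| ≤ |ψ m| := hmax
    have hKbd : |ψ m| ≤ |ψ m| * (1/2) := by
      have hmu : u ≤ m := hm.1
      calc |ψ m| = |∫ t in u..m, c t * ψ t| := by rw [← hseg u m hmu hu]
        _ ≤ ∫ t in u..m, |c t * ψ t| :=
            intervalIntegral.abs_integral_le_integral_abs hmu
        _ ≤ ∫ t in u..m, |c t| * |ψ m| := by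
            apply intervalIntegral.integral_mono_on hmu
              ((locInt_ii hcψ u m).abs) ((locInt_ii habs u m).mul_const _)
            intro t ht
            rw [abs_mul]
            exact mul_le_mul_of_nonneg_left
              (hK t ⟨ht.1, ht.2.trans hm.2⟩) (abs_nonneg _)
        _ = (∫ t in u..m, |c t|) * |ψ m| := intervalIntegral.integral_mul_const _ _
        _ ≤ (1/2) * |ψ m| := by
            apply mul_le_mul_of_nonneg_right _ (abs_nonneg _)
            refine le_trans (intervalIntegral.integral_mono_interval le_rfl hmu hm.2
              ?_ (locInt_ii habs u v)) hsmall
            exact Filter.Eventually.of_forall fun t => abs_nonneg _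
        _ = |ψ m| * (1/2) := by ring
    have hK0 : |ψ m| ≤ 0 := by linarith
    intro x hx
    have := (abs_nonneg (ψ x)).trans ((hK x hx).trans hK0)
    exact abs_eq_zero.mp (le_antisymm ((hK x hx).trans hK0) (abs_nonneg _))
  -- propagation
  intro x hax
  set T : Set ℝ := {r | r ∈ Icc a x ∧ ∀ s ∈ Icc a r, ψ s = 0} with hT
  have haT : a ∈ T := ⟨⟨le_refl a, hax⟩, fun s hs => by
    have : s = a := le_antisymm hs.2 hs.1
    rw [this, hψa]⟩
  have hTne : T.Nonempty := ⟨a, haT⟩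
  have hTbdd : BddAbove T := ⟨x, fun r hr => hr.1.2⟩
  set s₀ := sSup T with hs₀
  have has₀ : a ≤ s₀ := le_csSup hTbdd haT
  have hs₀x : s₀ ≤ x := csSup_le hTne fun r hr => hr.1.2
  -- ψ vanishes on [a, s₀)
  have hvan : ∀ s, a ≤ s → s < s₀ → ψ s = 0 := by
    intro s has hss
    obtain ⟨r, hrT, hsr⟩ := exists_lt_of_lt_csSup hTne hss
    exact hrT.2 s ⟨has, hsr.le⟩
  -- ψ s₀ = 0
  have hψs₀ : ψ s₀ = 0 := by
    rcases eq_or_lt_of_le has₀ with he | hlt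
    · rw [← he, hψa]
    · have hsub : Ico a s₀ ⊆ ψ ⁻¹' {0} := fun s hs => hvan s hs.1 hs.2
      have hclosed : IsClosed (ψ ⁻¹' {0}) := isClosed_singleton.preimage hψ
      have : s₀ ∈ closure (Ico a s₀) := by
        rw [closure_Ico hlt.ne]
        exact ⟨has₀, le_refl _⟩
      exact (closure_mono hsub).trans hclosed.closure_eq.subset this
  have hs₀T : ∀ s ∈ Icc a s₀, ψ s = 0 := by
    intro s hs
    rcases eq_or_lt_of_le hs.2 with he | hlt
    · rw [he, hψs₀]
    · exact hvan s hs.1 hlt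
  -- s₀ = x
  rcases eq_or_lt_of_le hs₀x with he | hlt
  · exact hs₀T x ⟨hax, he.ge⟩
  · exfalso
    have hC : ContinuousAt (fun r => ∫ t in s₀..r, |c t|) s₀ :=
      (intervalIntegral.continuous_primitive (fun u v => locInt_ii habs u v) s₀).continuousAt
    have h0 : (∫ t in s₀..s₀, |c t|) = 0 := intervalIntegral.integral_same
    obtain ⟨δ, hδpos, hδ⟩ := Metric.continuousAt_iff.mp hC (1/2) (by norm_num)
    set v := min (s₀ + δ/2) x with hv
    have hs₀v : s₀ < v := lt_min (by linarith) hlt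
    have hvx : v ≤ x := min_le_right _ _
    have hdist : dist v s₀ < δ := by
      rw [Real.dist_eq, abs_of_nonneg (by linarith : (0:ℝ) ≤ v - s₀)]
      have : v ≤ s₀ + δ/2 := min_le_left _ _
      linarith
    have hsmall : (∫ t in s₀..v, |c t|) ≤ 1/2 := by
      have := hδ hdist
      rw [Real.dist_eq, h0, sub_zero] at this
      exact (le_abs_self _).trans this.le
    have hstep := step s₀ v hs₀v.le hψs₀ hsmall
    have hvT : v ∈ T := by
      refine ⟨⟨has₀.trans hs₀v.le, hvx⟩, fun s hs => ?_⟩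
      rcases le_total s s₀ with hle | hge
      · exact hs₀T s ⟨hs.1, hle⟩
      · exact hstep s ⟨hge, hs.2⟩
    exact absurd (le_csSup hTbdd hvT) (not_le.mpr hs₀v)

lemma locInt_cont_mul {f g : ℝ → ℝ} (hf : LocallyIntegrable f volume) (hg : Continuous g) :
    LocallyIntegrable (fun x => g x * f x) volume := by
  rw [locallyIntegrable_iff] at hf ⊢
  exact fun k hk => IntegrableOn.continuousOn_mul hg.continuousOn (hf k hk) hk

lemma locInt_comp_neg {c : ℝ → ℝ} (hc : LocallyIntegrable c volume) :
    LocallyIntegrable (fun t => c (-t)) volume := by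
  rw [locallyIntegrable_iff] at hc ⊢
  intro k hk
  have h := (MeasurePreserving.integrableOn_comp_preimage
    (Measure.measurePreserving_neg (volume : Measure ℝ))
    (Homeomorph.neg ℝ).measurableEmbedding).2 (hc (-k) hk.neg)
  have hk' : (Neg.neg ⁻¹' (-k) : Set ℝ) = k := by
    ext t; simp
  rw [hk'] at h
  simpa [Function.comp_def] using h

lemma locACDeriv_mul {f f' g g' : ℝ → ℝ} (hf : LocACDeriv f f') (hg : LocACDeriv g g') :
    LocACDeriv (fun x => f x * g x) (fun x => f' x * g x + f x * g' x) := by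
  have hint : LocallyIntegrable (fun x => f' x * g x + f x * g' x) volume :=
    (locInt_mul_cont hf.1 hg.continuous).add (locInt_cont_mul hg.1 hf.continuous)
  refine ⟨hint, fun x z => ?_⟩
  rcases le_total z x with h | h
  · exact prodrule_le hf hg h
  · have h2 := prodrule_le hf hg (a := x) (b := z) h
    have h3 : (∫ t in z..x, (f' t * g t + f t * g' t)) =
        -∫ t in x..z, (f' t * g t + f t * g' t) := intervalIntegral.integral_symm x z
    show f x * g x = f z * g z + ∫ t in z..x, (f' t * g t + f t * g' t)
    rw [h3]; linarith

lemma uniq {c ψ : ℝ → ℝ} {a : ℝ} (hc : LocallyIntegrable c volume) (hψ : Continuous ψ)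
    (h : ∀ x, ψ x = ∫ t in a..x, c t * ψ t) : ∀ x, ψ x = 0 := by
  intro x
  rcases le_total a x with hax | hxa
  · exact uniq_forward hc hψ h x hax
  · have hc2 : LocallyIntegrable (fun t => -c (-t)) volume := (locInt_comp_neg hc).neg
    have hψ2 : Continuous fun t => ψ (-t) := hψ.comp continuous_neg
    have h2 : ∀ u, ψ (-u) = ∫ t in (-a)..u, (-c (-t)) * ψ (-t) := by
      intro u
      have e1 : (∫ t in (-a)..u, (fun s => c s * ψ s) (-t)) = ∫ t in (-u)..a, c t * ψ t := by
        have := intervalIntegral.integral_comp_neg (a := -a) (b := u)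
          (f := fun s => c s * ψ s)
        simpa using this
      calc ψ (-u) = ∫ t in a..(-u), c t * ψ t := h (-u)
        _ = -∫ t in (-u)..a, c t * ψ t := by rw [← intervalIntegral.integral_symm]
        _ = -∫ t in (-a)..u, c (-t) * ψ (-t) := by rw [← e1]
        _ = ∫ t in (-a)..u, (-c (-t)) * ψ (-t) := by
            rw [← intervalIntegral.integral_neg]
            congr 1
            funext t
            ring
    have := uniq_forward hc2 hψ2 h2 (-x) (by linarith)
    simpa using this

lemma alg1 (Y Y' G : ℝ) (hY : Y ≠ 0) :
    Y' * G + Y * (-Y' / Y ^ 2) = Y' / Y * (Y * G - 1) := by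
  field_simp
  ring

lemma locACDeriv_inv {y y' : ℝ → ℝ} (hy : LocACDeriv y y') (hpos : ∀ x, 0 < y x) :
    LocACDeriv (fun x => (y x)⁻¹) (fun x => -y' x / y x ^ 2) := by
  have cy := hy.continuous
  have hne : ∀ x, y x ≠ 0 := fun x => (hpos x).ne'
  have cyinv : Continuous fun x => (y x)⁻¹ := cy.inv₀ hne
  have hloc : LocallyIntegrable (fun x => -y' x / y x ^ 2) volume := by
    have hcont : Continuous fun x => -((y x ^ 2)⁻¹) :=
      ((cy.pow 2).inv₀ (fun x => pow_ne_zero 2 (hne x))).neg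
    have := locInt_mul_cont hy.1 hcont
    have e : (fun x => y' x * -((y x ^ 2)⁻¹)) = fun x => -y' x / y x ^ 2 := by
      funext x; field_simp
    rwa [e] at this
  have hgAC : LocACDeriv (fun x => (y 0)⁻¹ + ∫ t in (0:ℝ)..x, -y' t / y t ^ 2)
      (fun x => -y' x / y x ^ 2) := by
    apply locACDeriv_of_base hloc
    intro x
    simp
  have hprod := locACDeriv_mul hy hgAC
  have hψc : Continuous fun x => y x * ((y 0)⁻¹ + ∫ t in (0:ℝ)..x, -y' t / y t ^ 2) - 1 :=
    (cy.mul hgAC.continuous).sub continuous_const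
  have hyg0 : y 0 * ((y 0)⁻¹ + ∫ t in (0:ℝ)..(0:ℝ), -y' t / y t ^ 2) = 1 := by
    rw [intervalIntegral.integral_same, add_zero]
    exact mul_inv_cancel₀ (hne 0)
  have heq : ∀ x, (y x * ((y 0)⁻¹ + ∫ t in (0:ℝ)..x, -y' t / y t ^ 2) - 1) =
      ∫ t in (0:ℝ)..x, (y' t / y t) *
        (y t * ((y 0)⁻¹ + ∫ s in (0:ℝ)..t, -y' s / y s ^ 2) - 1) := by
    intro x
    have h1 : y x * ((y 0)⁻¹ + ∫ t in (0:ℝ)..x, -y' t / y t ^ 2) =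
        y 0 * ((y 0)⁻¹ + ∫ t in (0:ℝ)..(0:ℝ), -y' t / y t ^ 2) +
          ∫ t in (0:ℝ)..x, (y' t * ((y 0)⁻¹ + ∫ s in (0:ℝ)..t, -y' s / y s ^ 2) +
            y t * (-y' t / y t ^ 2)) := hprod.2 x 0
    have e2 : ∀ t : ℝ, (y' t * ((y 0)⁻¹ + ∫ s in (0:ℝ)..t, -y' s / y s ^ 2) +
        y t * (-y' t / y t ^ 2)) = (y' t / y t) *
          (y t * ((y 0)⁻¹ + ∫ s in (0:ℝ)..t, -y' s / y s ^ 2) - 1) :=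
      fun t => alg1 (y t) (y' t) _ (hne t)
    simp_rw [← e2]
    rw [h1, hyg0]
    ring
  have hyy : LocallyIntegrable (fun t => y' t / y t) volume := by
    have := locInt_mul_cont hy.1 cyinv
    have e : (fun x => y' x * (y x)⁻¹) = fun x => y' x / y x := by
      funext x; rw [div_eq_mul_inv]
    rwa [e] at this
  have hψ0 := uniq hyy hψc heq
  have hinv : ∀ x, (y x)⁻¹ = (y 0)⁻¹ + ∫ t in (0:ℝ)..x, -y' t / y t ^ 2 := by
    intro x
    have h1 : y x * ((y 0)⁻¹ + ∫ t in (0:ℝ)..x, -y' t / y t ^ 2) - 1 = 0 := hψ0 x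
    have h2 : y x * ((y 0)⁻¹ + ∫ t in (0:ℝ)..x, -y' t / y t ^ 2) = 1 := by linarith
    exact (eq_inv_of_mul_eq_one_left (by rw [mul_comm] at h2; exact h2)).symm
  apply locACDeriv_of_base hloc
  intro x
  have h0 : (∫ t in (0:ℝ)..(0:ℝ), -y' t / y t ^ 2) = 0 := intervalIntegral.integral_same
  rw [hinv x, hinv 0, h0, add_zero]

lemma integral_deriv_eq_zero_of_cs {F F' : ℝ → ℝ} (hF : LocACDeriv F F')
    (hcs : HasCompactSupport F) (hint : Integrable F' volume) : (∫ x, F' x) = 0 := by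
  obtain ⟨R₀, hR₀⟩ := hcs.isBounded.subset_closedBall 0
  have hzero : ∀ z : ℝ, R₀ < |z| → F z = 0 := by
    intro z hz
    apply image_eq_zero_of_notMem_tsupport
    intro hmem
    have := hR₀ hmem
    rw [Metric.mem_closedBall, Real.dist_eq, sub_zero] at this
    linarith
  have h1 : Filter.Tendsto (fun R : ℝ => ∫ t in (-R)..R, F' t) Filter.atTop
      (nhds (∫ x, F' x)) :=
    intervalIntegral_tendsto_integral hint Filter.tendsto_neg_atTop_atBot Filter.tendsto_id
  have h2 : ∀ᶠ R in Filter.atTop, (∫ t in (-R)..R, F' t) = 0 := by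
    filter_upwards [Filter.eventually_ge_atTop (|R₀| + 1)] with R hR
    have hR1 : R₀ < |R| := by
      have := le_abs_self R
      have := le_abs_self R₀
      linarith
    have hR2 : R₀ < |(-R)| := by rw [abs_neg]; exact hR1
    have h5 := hF.2 R (-R)
    rw [hzero R hR1, hzero (-R) hR2] at h5
    linarith
  have h3 : Filter.Tendsto (fun R : ℝ => ∫ t in (-R)..R, F' t) Filter.atTop (nhds 0) :=
    (Filter.tendsto_congr' h2).mpr tendsto_const_nhds
  exact tendsto_nhds_unique h1 h3

lemma integrable_cont_cs_mul {f g : ℝ → ℝ} (hf : LocallyIntegrable f volume)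
    (hg : Continuous g) (hcs : HasCompactSupport g) :
    Integrable (fun x => g x * f x) volume := by
  simpa [smul_eq_mul] using hf.integrable_smul_left_of_hasCompactSupport hg hcs

lemma amgm (P Y' E E' Yv : ℝ) (hP : 0 < P) (hY : Yv ≠ 0) :
    |(P * Y') * ((E' * E + E * E') * Yv⁻¹)| ≤ P * E' ^ 2 + (P * Y') ^ 2 * (E / Yv) ^ 2 * (1 / P) := by
  have h1 : (P * Y') ^ 2 * (E / Yv) ^ 2 * (1 / P) = P * (Y' * E / Yv) ^ 2 := by
    field_simp
  rw [h1]
  have h2 : (P * Y') * ((E' * E + E * E') * Yv⁻¹) = 2 * (P * (E' * (Y' * E / Yv))) := by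
    field_simp
    ring
  rw [h2, abs_le]
  constructor <;>
    nlinarith [mul_nonneg hP.le (sq_nonneg (E' + Y' * E / Yv)),
      mul_nonneg hP.le (sq_nonneg (E' - Y' * E / Yv))]

/-- Part (1) of the Allegretto–Piepenbrink-type theorem in the single-edge case `Γ = ℝ`:
a positive solution of `-(p y')' + q y = λ w y` on `ℝ` yields the lower bound `λ`
for the quadratic form on compactly supported functions. -/
theorem allegretto_piepenbrink_real_line
    (p q w : ℝ → ℝ) (hpm : Measurable p) (hqm : Measurable q) (hwm : Measurable w)
    (hppos : ∀ᵐ x ∂volume, 0 < p x)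
    (hwpos : ∀ᵐ x ∂volume, 0 ≤ w x)
    (hpint : LocallyIntegrable (fun x => 1 / p x) volume)
    (hqint : LocallyIntegrable q volume)
    (hwint : LocallyIntegrable w volume)
    (lam : ℝ) (y y' : ℝ → ℝ)
    (hypos : ∀ x : ℝ, 0 < y x)
    (hy : LocACDeriv y y')
    (hpy : LocACDeriv (fun x => p x * y' x) (fun x => (q x - lam * w x) * y x)) :
    ∀ η η' : ℝ → ℝ, HasCompactSupport η → LocACDeriv η η' →
      Integrable (fun x => p x * η' x ^ 2) →
      Integrable (fun x => |q x| * η x ^ 2) →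
      (∫ x : ℝ, (p x * η' x ^ 2 + q x * η x ^ 2)) ≥
        lam * ∫ x : ℝ, w x * η x ^ 2 := by
  intro η η' hcs hη hint1 hint2
  have cy := hy.continuous
  have cη := hη.continuous
  have cpy : Continuous fun x => p x * y' x := hpy.continuous
  have hne : ∀ x, y x ≠ 0 := fun x => (hypos x).ne'
  have cyinv : Continuous fun x => (y x)⁻¹ := cy.inv₀ hne
  have hη'm : AEStronglyMeasurable η' volume := hη.1.aestronglyMeasurable
  -- derivative chain
  have hη2 := locACDeriv_mul hη hη
  have hinv := locACDeriv_inv hy hypos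
  have hv := locACDeriv_mul hη2 hinv
  have hF := locACDeriv_mul hpy hv
  -- compact support of F
  have hFcs : HasCompactSupport fun x => (p x * y' x) * ((η x * η x) * (y x)⁻¹) := by
    apply hcs.mono
    intro x hx
    simp only [Function.mem_support] at hx ⊢
    intro h
    exact hx (by rw [h]; ring)
  -- integrability of the pieces
  have iqη : Integrable (fun x => q x * η x ^ 2) volume := by
    refine hint2.mono' (hqm.aestronglyMeasurable.mul (cη.pow 2).aestronglyMeasurable) ?_
    refine Filter.Eventually.of_forall fun x => ?_
    rw [Real.norm_eq_abs, abs_mul, abs_of_nonneg (sq_nonneg (η x))]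
  have hcsη2 : HasCompactSupport fun x => η x ^ 2 := by
    apply hcs.mono
    intro x hx
    simp only [Function.mem_support] at hx ⊢
    intro h
    exact hx (by rw [h]; ring)
  have iwη : Integrable (fun x => w x * η x ^ 2) volume := by
    have := integrable_cont_cs_mul hwint (cη.pow 2) hcsη2
    exact this.congr (Filter.Eventually.of_forall fun x => mul_comm _ _)
  have hGcont : Continuous fun x => (p x * y' x) ^ 2 * (η x / y x) ^ 2 :=
    (cpy.pow 2).mul ((cη.div cy hne).pow 2)
  have hGcs : HasCompactSupport fun x => (p x * y' x) ^ 2 * (η x / y x) ^ 2 := by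
    apply hcs.mono
    intro x hx
    simp only [Function.mem_support] at hx ⊢
    intro h
    exact hx (by rw [h]; simp)
  have iC : Integrable (fun x => (p x * y' x) ^ 2 * (η x / y x) ^ 2 * (1 / p x)) volume :=
    integrable_cont_cs_mul hpint hGcont hGcs
  have iB : Integrable (fun x => (p x * y' x) * ((η' x * η x + η x * η' x) * (y x)⁻¹)) volume := by
    apply Integrable.mono' (hint1.add iC)
    · exact cpy.aestronglyMeasurable.mul
        (((hη'm.mul cη.aestronglyMeasurable).add (cη.aestronglyMeasurable.mul hη'm)).mul
          cyinv.aestronglyMeasurable)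
    · filter_upwards [hppos] with x hp
      rw [Real.norm_eq_abs]
      exact amgm (p x) (y' x) (η x) (η' x) (y x) hp (hne x)
  have iCneg : Integrable (fun x => (p x * y' x) * ((η x * η x) * (-y' x / y x ^ 2))) volume := by
    apply iC.neg.congr
    filter_upwards [hppos] with x hp
    have h1 := hne x
    have h2 := hp.ne'
    rw [Pi.neg_apply]
    field_simp
  have iA : Integrable (fun x => ((q x - lam * w x) * y x) * ((η x * η x) * (y x)⁻¹)) volume := by
    have base : Integrable (fun x => q x * η x ^ 2 - lam * (w x * η x ^ 2)) volume :=
      iqη.sub (iwη.const_mul lam)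
    apply base.congr
    refine Filter.Eventually.of_forall fun x => ?_
    have h1 := hne x
    field_simp
  have iDF : Integrable (fun x => ((q x - lam * w x) * y x) * ((η x * η x) * (y x)⁻¹) +
      (p x * y' x) * ((η' x * η x + η x * η' x) * (y x)⁻¹ +
        (η x * η x) * (-y' x / y x ^ 2))) volume := by
    have := iA.add (iB.add iCneg)
    apply this.congr
    refine Filter.Eventually.of_forall fun x => ?_
    simp only [Pi.add_apply]
    ring
  have hzero : (∫ x, (((q x - lam * w x) * y x) * ((η x * η x) * (y x)⁻¹) +
      (p x * y' x) * ((η' x * η x + η x * η' x) * (y x)⁻¹ +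
        (η x * η x) * (-y' x / y x ^ 2)))) = 0 :=
    integral_deriv_eq_zero_of_cs hF hFcs iDF
  -- the nonnegative remainder
  have i_pq : Integrable (fun x => p x * η' x ^ 2 + q x * η x ^ 2) volume := hint1.add iqη
  have i_lw : Integrable (fun x => lam * (w x * η x ^ 2)) volume := iwη.const_mul lam
  have iG : Integrable (fun x => (p x * η' x ^ 2 + q x * η x ^ 2 - lam * (w x * η x ^ 2)) -
      (((q x - lam * w x) * y x) * ((η x * η x) * (y x)⁻¹) +
        (p x * y' x) * ((η' x * η x + η x * η' x) * (y x)⁻¹ +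
          (η x * η x) * (-y' x / y x ^ 2)))) volume := (i_pq.sub i_lw).sub iDF
  have hGnn : 0 ≤ ∫ x, ((p x * η' x ^ 2 + q x * η x ^ 2 - lam * (w x * η x ^ 2)) -
      (((q x - lam * w x) * y x) * ((η x * η x) * (y x)⁻¹) +
        (p x * y' x) * ((η' x * η x + η x * η' x) * (y x)⁻¹ +
          (η x * η x) * (-y' x / y x ^ 2)))) := by
    apply integral_nonneg_of_ae
    filter_upwards [hppos] with x hp
    have h1 := hne x
    have e : (p x * η' x ^ 2 + q x * η x ^ 2 - lam * (w x * η x ^ 2)) -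
        (((q x - lam * w x) * y x) * ((η x * η x) * (y x)⁻¹) +
          (p x * y' x) * ((η' x * η x + η x * η' x) * (y x)⁻¹ +
            (η x * η x) * (-y' x / y x ^ 2))) =
        p x * (η' x - η x * (y' x / y x)) ^ 2 := by
      field_simp
      ring
    rw [e]
    exact mul_nonneg hp.le (sq_nonneg _)
  have i_pql : Integrable (fun x => p x * η' x ^ 2 + q x * η x ^ 2 -
      lam * (w x * η x ^ 2)) volume := i_pq.sub i_lw
  have e2 : (∫ x, ((p x * η' x ^ 2 + q x * η x ^ 2 - lam * (w x * η x ^ 2)) -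
      (((q x - lam * w x) * y x) * ((η x * η x) * (y x)⁻¹) +
        (p x * y' x) * ((η' x * η x + η x * η' x) * (y x)⁻¹ +
          (η x * η x) * (-y' x / y x ^ 2))))) =
      ((∫ x, (p x * η' x ^ 2 + q x * η x ^ 2)) - lam * ∫ x, (w x * η x ^ 2)) - 0 := by
    rw [integral_sub i_pql iDF, integral_sub i_pq i_lw, integral_const_mul, hzero]
  rw [e2] at hGnn
  linarith
end

section
/- Let λ ∈ ℝ, suppose ∫_a^b 1/p(t) dt > 0, and let y be a solution of -(p y')' + q y = λ w y on [a,b] with sup_{t ∈ [a,b]} |y(t)| ≤ C₁ for some constant C₁ ≥ 0. Then sup_{x ∈ [a,b]} |(p y')(x)| ≤ 2 C₁ / ∫_a^b (1/p(t)) dt + C₁ ∫_a^b (|q(t)| + |λ| w(t)) dt. -/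
open MeasureTheory Set

/-- Uniform bound on the quasi-derivative of a bounded solution. -/
theorem quasi_derivative_uniform_bound (a b : ℝ) (hab : a < b)
    (p q w : ℝ → ℝ) (hpm : Measurable p) (hqm : Measurable q) (hwm : Measurable w)
    (hppos : ∀ᵐ x ∂volume, x ∈ Icc a b → 0 < p x)
    (hwpos : ∀ᵐ x ∂volume, x ∈ Icc a b → 0 ≤ w x)
    (hpint : IntegrableOn (fun x => 1 / p x) (Icc a b))
    (hqint : IntegrableOn q (Icc a b))
    (hwint : IntegrableOn w (Icc a b))
    (hpos : 0 < ∫ t in a..b, 1 / p t)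
    (lam : ℝ) (y y' : ℝ → ℝ)
    (hy : SLSolution a b lam p q w y y')
    (C₁ : ℝ) (hC₁ : 0 ≤ C₁) (hybd : ∀ t ∈ Icc a b, |y t| ≤ C₁) :
    ∀ x ∈ Icc a b,
      |p x * y' x| ≤ 2 * C₁ / (∫ t in a..b, 1 / p t) +
        C₁ * ∫ t in a..b, (|q t| + |lam| * w t) := by
  intro x hx
  obtain ⟨⟨hy'int, hyeq⟩, hgint, hueq⟩ := hy
  have hab' : a ≤ b := hab.le
  set u : ℝ → ℝ := fun t => p t * y' t with hu
  set g : ℝ → ℝ := fun t => (q t - lam * w t) * y t with hg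
  set I := ∫ t in a..b, 1 / p t with hIdef
  set J := ∫ t in a..b, (|q t| + |lam| * w t) with hJdef
  -- bound the integral of |g| over Icc a b
  have hQWint : IntegrableOn (fun t => |q t| + |lam| * w t) (Icc a b) :=
    hqint.abs.add (hwint.const_mul _)
  have hgabs : ∫ t in Icc a b, |g t| ≤ C₁ * J := by
    have hJ' : J = ∫ t in Icc a b, (|q t| + |lam| * w t) := by
      rw [hJdef, intervalIntegral.integral_of_le hab',
        MeasureTheory.integral_Icc_eq_integral_Ioc]
    rw [hJ', ← MeasureTheory.integral_const_mul]
    apply MeasureTheory.integral_mono_ae hgint.abs ((hQWint.const_mul C₁))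
    filter_upwards [ae_restrict_of_ae hwpos,
      ae_restrict_mem measurableSet_Icc] with t hw ht
    have h1 : |g t| = |q t - lam * w t| * |y t| := abs_mul _ _
    have h2 : |q t - lam * w t| ≤ |q t| + |lam| * w t := by
      calc |q t - lam * w t| ≤ |q t| + |lam * w t| := abs_sub _ _
        _ = |q t| + |lam| * |w t| := by rw [abs_mul]
        _ = |q t| + |lam| * w t := by rw [abs_of_nonneg (hw ht)]
    have h3 : |y t| ≤ C₁ := hybd t ht
    have h4 : (0:ℝ) ≤ |q t| + |lam| * w t := le_trans (abs_nonneg _) h2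
    calc |g t| = |q t - lam * w t| * |y t| := h1
      _ ≤ (|q t| + |lam| * w t) * C₁ := by
          exact mul_le_mul h2 h3 (abs_nonneg _) h4
      _ = C₁ * (|q t| + |lam| * w t) := mul_comm _ _
  -- oscillation bound on u
  have hdiff : ∀ s ∈ Icc a b, ∀ t ∈ Icc a b, |u s - u t| ≤ C₁ * J := by
    intro s hs t ht
    have hus := hueq s hs
    have hut := hueq t ht
    have heq : u s - u t = ∫ r in t..s, g r := by
      have h5 := intervalIntegral.integral_interval_sub_left
        (hgint.mono_set (uIcc_subset_Icc ⟨le_refl a, hab'⟩ hs) |>.intervalIntegrable)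
        (hgint.mono_set (uIcc_subset_Icc ⟨le_refl a, hab'⟩ ht) |>.intervalIntegrable)
      rw [hus, hut, ← h5]
      ring
    rw [heq]
    calc |∫ r in t..s, g r| ≤ ∫ r in uIoc t s, |g r| :=
          by
            simpa [Real.norm_eq_abs] using
              intervalIntegral.norm_integral_le_integral_norm_uIoc
                (f := g) (a := t) (b := s) (μ := volume)
      _ ≤ ∫ r in Icc a b, |g r| := by
          apply setIntegral_mono_set hgint.abs
          · filter_upwards with r using abs_nonneg _
          · exact (uIoc_subset_uIcc.trans (uIcc_subset_Icc ht hs)).eventuallyLE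
      _ ≤ C₁ * J := hgabs
  -- the main estimate
  set c := u x with hc
  have hpIoc : IntegrableOn (fun t => 1 / p t) (Ioc a b) :=
    hpint.mono_set Ioc_subset_Icc_self
  have hy'Ioc : IntegrableOn y' (Ioc a b) := hy'int.mono_set Ioc_subset_Icc_self
  have hIeq : I = ∫ t in Ioc a b, 1 / p t := intervalIntegral.integral_of_le hab'
  have hyb : y b - y a = ∫ t in Ioc a b, y' t := by
    have := hyeq b ⟨hab', le_refl b⟩
    rw [this, intervalIntegral.integral_of_le hab']
    ring
  have hsub : ∫ t in Ioc a b, (c * (1 / p t) - y' t) = c * I - (y b - y a) := by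
    rw [MeasureTheory.integral_sub (hpIoc.const_mul c) hy'Ioc,
      MeasureTheory.integral_const_mul, ← hIeq, hyb]
  have hbnd : |∫ t in Ioc a b, (c * (1 / p t) - y' t)| ≤ C₁ * J * I := by
    have hGint : Integrable (fun t => C₁ * J * (1 / p t))
        (volume.restrict (Ioc a b)) := hpIoc.const_mul _
    have hae : ∀ᵐ t ∂volume.restrict (Ioc a b),
        ‖c * (1 / p t) - y' t‖ ≤ C₁ * J * (1 / p t) := by
      filter_upwards [ae_restrict_of_ae hppos,
        ae_restrict_mem measurableSet_Ioc] with t hp ht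
      have ht' : t ∈ Icc a b := Ioc_subset_Icc_self ht
      have hpt : 0 < p t := hp ht'
      have hy't : y' t = u t * (1 / p t) := by
        rw [hu]
        field_simp
      rw [hy't, Real.norm_eq_abs]
      have : c * (1 / p t) - u t * (1 / p t) = (c - u t) * (1 / p t) := by ring
      rw [this, abs_mul, abs_of_nonneg (by positivity : (0:ℝ) ≤ 1 / p t)]
      exact mul_le_mul_of_nonneg_right (hdiff x hx t ht') (by positivity)
    calc |∫ t in Ioc a b, (c * (1 / p t) - y' t)|
        ≤ ∫ t in Ioc a b, C₁ * J * (1 / p t) :=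
          MeasureTheory.norm_integral_le_of_norm_le hGint hae
      _ = C₁ * J * I := by rw [MeasureTheory.integral_const_mul, ← hIeq]
  have hyab : |y b - y a| ≤ 2 * C₁ := by
    calc |y b - y a| ≤ |y b| + |y a| := abs_sub _ _
      _ ≤ C₁ + C₁ := add_le_add (hybd b ⟨hab', le_refl b⟩) (hybd a ⟨le_refl a, hab'⟩)
      _ = 2 * C₁ := by ring
  rw [hsub] at hbnd
  have hcI : |c| * I ≤ 2 * C₁ + C₁ * J * I := by
    have h1 : |c * I| ≤ |c * I - (y b - y a)| + |y b - y a| := by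
      have := abs_add_le (c * I - (y b - y a)) (y b - y a)
      simpa using this
    have h2 : |c * I| = |c| * I := by rw [abs_mul, abs_of_pos hpos]
    linarith [h1, h2 ▸ h1]
  have : |c| ≤ (2 * C₁ + C₁ * J * I) / I := (le_div_iff₀ hpos).mpr hcI
  calc |c| ≤ (2 * C₁ + C₁ * J * I) / I := this
    _ = 2 * C₁ / I + C₁ * J := by field_simp
end

section
/- Let f : [a,b] → ℝ be absolutely continuous with derivative f' and ∫_a^b p(t) f'(t)² dt < ∞, let w : [a,b] → ℝ be measurable with w ≥ 0 a.e. and w integrable on [a,b], let I ⊆ [a,b] be a subinterval and x ∈ I. Then |f(x)|² · ∫_I w(y) dy ≤ 2 ∫_I w(y) f(y)² dy + 2 (∫_I w(y) dy) (∫_I (1/p(y)) dy) (∫_a^b p(y) f'(y)² dy). -/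
open MeasureTheory Set

/-- Averaged pointwise estimate over a subinterval `I = [c,d] ⊆ [a,b]`. -/
theorem averaged_pointwise_estimate (a b : ℝ) (hab : a < b)
    (p : ℝ → ℝ) (hpm : Measurable p)
    (hppos : ∀ᵐ x ∂volume, x ∈ Icc a b → 0 < p x)
    (hpint : IntegrableOn (fun t => 1 / p t) (Icc a b))
    (w : ℝ → ℝ) (hwm : Measurable w)
    (hwpos : ∀ᵐ x ∂volume, x ∈ Icc a b → 0 ≤ w x)
    (hwint : IntegrableOn w (Icc a b))
    (f f' : ℝ → ℝ) (hf : ACDeriv a b f f')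
    (hfp : IntegrableOn (fun t => p t * f' t ^ 2) (Icc a b))
    (c d : ℝ) (hac : a ≤ c) (hcd : c ≤ d) (hdb : d ≤ b)
    (x : ℝ) (hx : x ∈ Icc c d) :
    |f x| ^ 2 * (∫ t in c..d, w t) ≤
      2 * (∫ t in c..d, w t * f t ^ 2) +
      2 * (∫ t in c..d, w t) * (∫ t in c..d, 1 / p t) *
        (∫ t in a..b, p t * f' t ^ 2) := by
  have hsub : Icc c d ⊆ Icc a b := Icc_subset_Icc hac hdb
  have hmsub : MeasurableSet (Icc c d) := measurableSet_Icc
  -- abbreviations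
  set A : ℝ := ∫ t in Icc c d, 1 / p t with hA
  set B2 : ℝ := ∫ t in Icc c d, p t * f' t ^ 2 with hB2
  set B : ℝ := ∫ t in Icc a b, p t * f' t ^ 2 with hB
  set W : ℝ := ∫ t in Icc c d, w t with hW
  set S : ℝ := ∫ t in Icc c d, |f' t| with hS
  -- a.e. positivity on the restricted measures
  have hppos' : ∀ᵐ t ∂(volume.restrict (Icc c d)), 0 < p t := by
    filter_upwards [ae_restrict_of_ae hppos, ae_restrict_mem hmsub] with t h1 h2
    exact h1 (hsub h2)
  have hpposab : ∀ᵐ t ∂(volume.restrict (Icc a b)), 0 < p t :=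
    (ae_restrict_iff' measurableSet_Icc).2 hppos
  have hwpos' : ∀ᵐ t ∂(volume.restrict (Icc c d)), 0 ≤ w t := by
    filter_upwards [ae_restrict_of_ae hwpos, ae_restrict_mem hmsub] with t h1 h2
    exact h1 (hsub h2)
  -- interval integrals = set integrals over Icc
  have hIoc : ∀ g : ℝ → ℝ, (∫ t in c..d, g t) = ∫ t in Icc c d, g t := fun g => by
    rw [intervalIntegral.integral_of_le hcd, integral_Icc_eq_integral_Ioc]
  have hIocab : (∫ t in a..b, p t * f' t ^ 2) = B := by
    rw [intervalIntegral.integral_of_le hab.le, hB, integral_Icc_eq_integral_Ioc]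
  -- basic nonnegativity
  have hA0 : 0 ≤ A := by
    refine setIntegral_nonneg_ae hmsub ?_
    filter_upwards [hppos] with t ht hmem
    exact le_of_lt (one_div_pos.2 (ht (hsub hmem)))
  have hB20 : 0 ≤ B2 := by
    refine setIntegral_nonneg_ae hmsub ?_
    filter_upwards [hppos] with t ht hmem
    exact mul_nonneg (le_of_lt (ht (hsub hmem))) (sq_nonneg _)
  have hW0 : 0 ≤ W := by
    refine setIntegral_nonneg_ae hmsub ?_
    filter_upwards [hwpos] with t ht hmem
    exact ht (hsub hmem)
  have hB2B : B2 ≤ B := by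
    refine setIntegral_mono_set hfp ?_ (HasSubset.Subset.eventuallyLE hsub)
    filter_upwards [hpposab] with t ht
    exact mul_nonneg ht.le (sq_nonneg _)
  have hB0 : 0 ≤ B := hB20.trans hB2B
  -- integrability on the subinterval
  have hf'int : IntegrableOn f' (Icc c d) := hf.1.mono_set hsub
  have hpint' : IntegrableOn (fun t => 1 / p t) (Icc c d) := hpint.mono_set hsub
  have hfpint' : IntegrableOn (fun t => p t * f' t ^ 2) (Icc c d) := hfp.mono_set hsub
  -- Cauchy–Schwarz: S ≤ √A * √B2
  have hCS : S ≤ Real.sqrt A * Real.sqrt B2 := by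
    set μ := volume.restrict (Icc c d)
    set g1 : ℝ → ℝ := fun t => Real.sqrt (1 / p t)
    set g2 : ℝ → ℝ := fun t => Real.sqrt (p t) * |f' t|
    have hconj : (2:ℝ).HolderConjugate 2 := by constructor <;> norm_num
    have hg1m : AEStronglyMeasurable g1 μ :=
      ((measurable_const.div hpm).sqrt).aestronglyMeasurable
    have hg2m : AEStronglyMeasurable g2 μ :=
      (hpm.sqrt.aemeasurable.mul hf'int.abs.aemeasurable).aestronglyMeasurable
    have hg1sq : (fun t => g1 t ^ 2) =ᵐ[μ] fun t => 1 / p t := by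
      filter_upwards [hppos'] with t ht
      simp only [g1, Real.sqrt_inv, one_div, inv_pow]
      rw [Real.sq_sqrt ht.le]
    have hg2sq : (fun t => g2 t ^ 2) =ᵐ[μ] fun t => p t * f' t ^ 2 := by
      filter_upwards [hppos'] with t ht
      simp only [g2, mul_pow, sq_abs]
      rw [Real.sq_sqrt ht.le]
    have hg1L : MemLp g1 (ENNReal.ofReal 2) μ := by
      rw [show ENNReal.ofReal 2 = 2 by norm_num, memLp_two_iff_integrable_sq hg1m]
      exact hpint'.congr hg1sq.symm
    have hg2L : MemLp g2 (ENNReal.ofReal 2) μ := by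
      rw [show ENNReal.ofReal 2 = 2 by norm_num, memLp_two_iff_integrable_sq hg2m]
      exact hfpint'.congr hg2sq.symm
    have hmul : (fun t => g1 t * g2 t) =ᵐ[μ] fun t => |f' t| := by
      filter_upwards [hppos'] with t ht
      have hsp : (0:ℝ) < Real.sqrt (p t) := Real.sqrt_pos.2 ht
      show Real.sqrt (1 / p t) * (Real.sqrt (p t) * |f' t|) = |f' t|
      rw [one_div, Real.sqrt_inv, ← mul_assoc, inv_mul_cancel₀ hsp.ne', one_mul]
    have h := integral_mul_le_Lp_mul_Lq_of_nonneg hconj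
      (Filter.Eventually.of_forall fun t => Real.sqrt_nonneg _)
      (Filter.Eventually.of_forall fun t => mul_nonneg (Real.sqrt_nonneg _) (abs_nonneg _))
      hg1L hg2L
    rw [integral_congr_ae hmul] at h
    have e1 : (∫ t, g1 t ^ (2:ℝ) ∂μ) = A := by
      simp only [Real.rpow_two]
      rw [integral_congr_ae hg1sq, hA]
    have e2 : (∫ t, g2 t ^ (2:ℝ) ∂μ) = B2 := by
      simp only [Real.rpow_two]
      rw [integral_congr_ae hg2sq, hB2]
    rw [e1, e2] at h
    calc S ≤ A ^ (1/2:ℝ) * B2 ^ (1/2:ℝ) := h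
    _ = Real.sqrt A * Real.sqrt B2 := by rw [Real.sqrt_eq_rpow, Real.sqrt_eq_rpow]
  have hS2 : S ^ 2 ≤ A * B := by
    have h1 : S ^ 2 ≤ A * B2 := by
      have := mul_le_mul hCS hCS (by positivity) (by positivity)
      calc S ^ 2 = S * S := sq S
      _ ≤ (Real.sqrt A * Real.sqrt B2) * (Real.sqrt A * Real.sqrt B2) := this
      _ = A * B2 := by
        rw [mul_mul_mul_comm, Real.mul_self_sqrt hA0, Real.mul_self_sqrt hB20]
    exact h1.trans (mul_le_mul_of_nonneg_left hB2B hA0)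
  -- pointwise bound: for y ∈ [c,d], (f x - f y)² ≤ S²
  have hxab : x ∈ Icc a b := hsub hx
  have hpt : ∀ y ∈ Icc c d, |f x - f y| ≤ S := by
    intro y hy
    have hyab : y ∈ Icc a b := hsub hy
    have hfy := hf.2 y hyab
    have hfx := hf.2 x hxab
    have hint : f x - f y = ∫ t in y..x, f' t := by
      rw [hfx, hfy]
      have h1 : IntervalIntegrable f' volume a x := by
        rw [intervalIntegrable_iff_integrableOn_Ioc_of_le hxab.1]
        exact hf.1.mono_set (Ioc_subset_Icc_self.trans (Icc_subset_Icc le_rfl hxab.2))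
      have h2 : IntervalIntegrable f' volume a y := by
        rw [intervalIntegrable_iff_integrableOn_Ioc_of_le hyab.1]
        exact hf.1.mono_set (Ioc_subset_Icc_self.trans (Icc_subset_Icc le_rfl hyab.2))
      rw [← intervalIntegral.integral_interval_sub_left h1 h2]
      ring
    rw [hint]
    have h3 := intervalIntegral.norm_integral_le_integral_norm_uIoc
      (f := f') (a := y) (b := x) (μ := volume)
    simp only [Real.norm_eq_abs] at h3
    refine h3.trans ?_
    have huIcc : uIoc y x ⊆ Icc c d := uIoc_subset_uIcc.trans (uIcc_subset_Icc hy hx)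
    refine setIntegral_mono_set (hf'int.abs) ?_ (HasSubset.Subset.eventuallyLE huIcc)
    exact Filter.Eventually.of_forall fun t => abs_nonneg _
  -- continuity / boundedness of f on [c,d] to get integrability of w * f²
  have hfcont : ContinuousOn f (Icc a b) := by
    have := (intervalIntegral.continuousOn_primitive_interval
      (by rw [uIcc_of_le hab.le]; exact hf.1 : IntegrableOn f' (uIcc a b) volume))
    have h2 : ContinuousOn (fun y => f a + ∫ t in a..y, f' t) (Icc a b) := by
      rw [← uIcc_of_le hab.le]
      exact continuousOn_const.add this
    exact h2.congr fun y hy => hf.2 y hy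
  obtain ⟨M, hM'⟩ := isCompact_Icc.exists_bound_of_continuousOn (hfcont.mono hsub)
  have hM : ∀ y ∈ Icc c d, |f y| ≤ M := fun y hy => by
    simpa [Real.norm_eq_abs] using hM' y hy
  have hfm : AEStronglyMeasurable f (volume.restrict (Icc c d)) :=
    (hfcont.mono hsub).aestronglyMeasurable hmsub
  have hwf2int : IntegrableOn (fun t => w t * f t ^ 2) (Icc c d) := by
    refine Integrable.mono' ((hwint.mono_set hsub).abs.const_mul (M ^ 2))
      ((hwm.aemeasurable.mul (hfm.aemeasurable.pow_const 2)).aestronglyMeasurable) ?_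
    filter_upwards [ae_restrict_mem hmsub] with t ht
    have h1 : |f t| ≤ M := hM t ht
    have hM0 : 0 ≤ M := (abs_nonneg _).trans h1
    have : |w t * f t ^ 2| = |w t| * f t ^ 2 := by
      rw [abs_mul, abs_of_nonneg (sq_nonneg (f t))]
    rw [Real.norm_eq_abs, this]
    calc |w t| * f t ^ 2 ≤ |w t| * M ^ 2 := by
          refine mul_le_mul_of_nonneg_left ?_ (abs_nonneg _)
          calc f t ^ 2 = |f t| ^ 2 := (sq_abs _).symm
          _ ≤ M ^ 2 := pow_le_pow_left₀ (abs_nonneg _) h1 2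
    _ = M ^ 2 * |w t| := mul_comm _ _
  -- main integration step
  have hkey : |f x| ^ 2 * W ≤ 2 * (∫ t in Icc c d, w t * f t ^ 2) + 2 * A * B * W := by
    have hmono : (∫ t in Icc c d, w t * |f x| ^ 2) ≤
        ∫ t in Icc c d, (2 * (w t * f t ^ 2) + 2 * A * B * w t) := by
      refine integral_mono_ae ((hwint.mono_set hsub).mul_const _)
        ((hwf2int.const_mul 2).add ((hwint.mono_set hsub).const_mul (2 * A * B))) ?_
      filter_upwards [hwpos', ae_restrict_mem hmsub] with t hwt hmem
      have h1 : |f x - f t| ≤ S := hpt t hmem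
      have h2 : |f x| ^ 2 ≤ 2 * f t ^ 2 + 2 * (A * B) := by
        have h3 : (f x - f t) ^ 2 ≤ S ^ 2 := by
          rw [← sq_abs (f x - f t)]
          exact pow_le_pow_left₀ (abs_nonneg _) h1 2
        have h4 := h3.trans hS2
        rw [sq_abs]
        nlinarith [sq_nonneg (f x - 2 * f t)]
      calc w t * |f x| ^ 2 ≤ w t * (2 * f t ^ 2 + 2 * (A * B)) :=
            mul_le_mul_of_nonneg_left h2 hwt
      _ = 2 * (w t * f t ^ 2) + 2 * A * B * w t := by ring
    have hlhs : (∫ t in Icc c d, w t * |f x| ^ 2) = |f x| ^ 2 * W := by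
      rw [hW, ← integral_const_mul]
      exact integral_congr_ae (Filter.Eventually.of_forall fun t => mul_comm _ _)
    have hrhs : (∫ t in Icc c d, (2 * (w t * f t ^ 2) + 2 * A * B * w t)) =
        2 * (∫ t in Icc c d, w t * f t ^ 2) + 2 * A * B * W := by
      rw [integral_add (hwf2int.const_mul 2) ((hwint.mono_set hsub).const_mul (2 * A * B)),
        integral_const_mul, integral_const_mul]
    rw [hlhs, hrhs] at hmono
    exact hmono
  -- conclude
  rw [hIoc w, hIoc (fun t => w t * f t ^ 2), hIoc (fun t => 1 / p t), hIocab]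
  calc |f x| ^ 2 * W ≤ 2 * (∫ t in Icc c d, w t * f t ^ 2) + 2 * A * B * W := hkey
  _ = 2 * (∫ t in Icc c d, w t * f t ^ 2) + 2 * W * A * B := by ring
end

section
/- Let ε > 0, δ > 0 and c > 0 with 2δ ≤ b − a. Suppose that for every x ∈ [a,b]: ∫_{[a,b] ∩ [x−δ, x+δ]} (1/p(t)) dt ≤ ε/2 and ∫_{[a,b] ∩ [x−δ/2, x+δ/2]} w(t) dt ≥ c. Then every absolutely continuous f : [a,b] → ℝ with derivative f' satisfies sup_{x ∈ [a,b]} |f(x)|² ≤ ε ∫_a^b p(t) f'(t)² dt + (2/c) ∫_a^b w(t) f(t)² dt. (Single-edge version of Lemma 4.3, with C_ε = 2/c.) -/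
open MeasureTheory Set
open scoped ENNReal NNReal

/-- Single-edge version of the Sobolev-type Lemma 4.3, with `C_ε = 2/c`.
The integrals on the right-hand side are taken in `[0,∞]` so that the claim
covers every absolutely continuous `f`. -/
theorem sobolev_type_lemma (a b : ℝ) (hab : a < b)
    (p w : ℝ → ℝ) (hpm : Measurable p) (hwm : Measurable w)
    (hppos : ∀ᵐ x ∂volume, x ∈ Icc a b → 0 < p x)
    (hwpos : ∀ᵐ x ∂volume, x ∈ Icc a b → 0 ≤ w x)
    (hpint : IntegrableOn (fun t => 1 / p t) (Icc a b))
    (hwint : IntegrableOn w (Icc a b))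
    (ε δ c : ℝ) (hε : 0 < ε) (hδ : 0 < δ) (hc : 0 < c) (hδab : 2 * δ ≤ b - a)
    (hpsmall : ∀ x ∈ Icc a b,
      (∫ t in Icc a b ∩ Icc (x - δ) (x + δ), 1 / p t) ≤ ε / 2)
    (hwbig : ∀ x ∈ Icc a b,
      c ≤ ∫ t in Icc a b ∩ Icc (x - δ / 2) (x + δ / 2), w t) :
    ∀ f f' : ℝ → ℝ, ACDeriv a b f f' →
      ∀ x ∈ Icc a b,
        ENNReal.ofReal (|f x| ^ 2) ≤
          ENNReal.ofReal ε * (∫⁻ t in Icc a b, ENNReal.ofReal (p t * f' t ^ 2)) +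
          ENNReal.ofReal (2 / c) *
            (∫⁻ t in Icc a b, ENNReal.ofReal (w t * f t ^ 2)) := by
  intro f f' hAC x hx
  obtain ⟨hf'int, hfeq⟩ := hAC
  obtain ⟨hax, hxb⟩ := hx
  set K := Icc a b ∩ Icc (x - δ / 2) (x + δ / 2) with hKdef
  set J := Icc a b ∩ Icc (x - δ) (x + δ) with hJdef
  set A := ∫⁻ t in Icc a b, ENNReal.ofReal (p t * f' t ^ 2) with hAdef
  set B := ∫⁻ t in Icc a b, ENNReal.ofReal (w t * f t ^ 2) with hBdef
  have hKmeas : MeasurableSet K := measurableSet_Icc.inter measurableSet_Icc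
  have hJmeas : MeasurableSet J := measurableSet_Icc.inter measurableSet_Icc
  have hKsub : K ⊆ Icc a b := inter_subset_left
  have hJsub : J ⊆ Icc a b := inter_subset_left
  have hKJ : K ⊆ J :=
    inter_subset_inter_right _ (Icc_subset_Icc (by linarith) (by linarith))
  have hxK : x ∈ K := ⟨⟨hax, hxb⟩, by constructor <;> linarith⟩
  -- continuity of f on [a,b]
  have hfc : ContinuousOn f (Icc a b) := by
    have h1 : ContinuousOn (fun y => f a + ∫ t in a..y, f' t) (Icc a b) := by
      have := intervalIntegral.continuousOn_primitive_interval
        (f := f') (a := a) (b := b) (μ := volume)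
        (by simpa [Set.uIcc_of_le hab.le] using hf'int)
      rw [Set.uIcc_of_le hab.le] at this; exact continuousOn_const.add this
    exact h1.congr hfeq
  have hfae : AEStronglyMeasurable f (volume.restrict (Icc a b)) :=
    hfc.aestronglyMeasurable measurableSet_Icc
  have hf'ae : AEStronglyMeasurable f' (volume.restrict (Icc a b)) :=
    hf'int.aestronglyMeasurable
  -- positivity of p on J (a.e.)
  have hpposJ : ∀ᵐ t ∂volume.restrict J, 0 < p t := by
    filter_upwards [ae_restrict_of_ae hppos, ae_restrict_mem hJmeas] with t h1 h2
    exact h1 (hJsub h2)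
  -- Step 1: Cauchy–Schwarz bound for the gradient term
  have hCS : (∫⁻ t in J, ENNReal.ofReal |f' t|) ^ 2 ≤
      ENNReal.ofReal (ε / 2) * A := by
    set G : ℝ → ℝ≥0∞ := fun t => ENNReal.ofReal (Real.sqrt (1 / p t)) with hGdef
    set H : ℝ → ℝ≥0∞ := fun t => ENNReal.ofReal (Real.sqrt (p t * f' t ^ 2)) with hHdef
    have hGm : Measurable G := (measurable_const.div hpm).sqrt.ennreal_ofReal
    have hf'J : AEMeasurable f' (volume.restrict J) :=
      (hf'ae.mono_measure (Measure.restrict_mono hJsub le_rfl)).aemeasurable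
    have hHae : AEMeasurable H (volume.restrict J) := by
      refine AEMeasurable.ennreal_ofReal ?_
      exact (Real.continuous_sqrt.measurable.comp_aemeasurable
        (hpm.aemeasurable.mul (hf'J.pow_const 2)))
    have hpq : Real.HolderConjugate 2 2 := Real.HolderConjugate.two_two
    have hHolder := ENNReal.lintegral_mul_le_Lp_mul_Lq (volume.restrict J) hpq
      hGm.aemeasurable hHae
    have hGH : ∫⁻ t in J, ENNReal.ofReal |f' t| = ∫⁻ t in J, (G * H) t := by
      refine lintegral_congr_ae ?_
      filter_upwards [hpposJ] with t hpt
      have hmul : Real.sqrt (1 / p t) * Real.sqrt (p t * f' t ^ 2) = |f' t| := by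
        rw [← Real.sqrt_mul (by positivity)]
        have : 1 / p t * (p t * f' t ^ 2) = f' t ^ 2 := by
          field_simp
        rw [this, Real.sqrt_sq_eq_abs]
      simp only [Pi.mul_apply, hGdef, hHdef,
        ← ENNReal.ofReal_mul (Real.sqrt_nonneg _), hmul]
    have hG2 : ∫⁻ t in J, G t ^ (2:ℝ) = ENNReal.ofReal (∫ t in J, 1 / p t) := by
      rw [ofReal_integral_eq_lintegral_ofReal (hpint.mono_set hJsub) ?_]
      · refine lintegral_congr_ae ?_
        filter_upwards [hpposJ] with t hpt
        rw [hGdef, ENNReal.ofReal_rpow_of_nonneg (Real.sqrt_nonneg _) (by norm_num)]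
        congr 1
        rw [show ((2:ℝ)) = ((2:ℕ):ℝ) by norm_num, Real.rpow_natCast,
          Real.sq_sqrt (by positivity)]
      · filter_upwards [hpposJ] with t hpt
        positivity
    have hH2 : ∫⁻ t in J, H t ^ (2:ℝ) = ∫⁻ t in J, ENNReal.ofReal (p t * f' t ^ 2) := by
      refine lintegral_congr_ae ?_
      filter_upwards [hpposJ] with t hpt
      rw [hHdef, ENNReal.ofReal_rpow_of_nonneg (Real.sqrt_nonneg _) (by norm_num)]
      congr 1
      rw [show ((2:ℝ)) = ((2:ℕ):ℝ) by norm_num, Real.rpow_natCast,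
        Real.sq_sqrt (by positivity)]
    have hhalf : ∀ z : ℝ≥0∞, (z ^ ((2:ℝ)⁻¹)) ^ (2:ℕ) = z := by
      intro z
      rw [← ENNReal.rpow_natCast (z ^ ((2:ℝ)⁻¹)) 2, ← ENNReal.rpow_mul]
      norm_num
    calc (∫⁻ t in J, ENNReal.ofReal |f' t|) ^ 2
        = (∫⁻ t in J, (G * H) t) ^ 2 := by rw [hGH]
      _ ≤ ((∫⁻ t in J, G t ^ (2:ℝ)) ^ (1/(2:ℝ)) *
            (∫⁻ t in J, H t ^ (2:ℝ)) ^ (1/(2:ℝ))) ^ 2 := by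
          exact pow_le_pow_left' hHolder 2
      _ = (∫⁻ t in J, G t ^ (2:ℝ)) * (∫⁻ t in J, H t ^ (2:ℝ)) := by
          rw [mul_pow]
          simp only [one_div]
          rw [hhalf, hhalf]
      _ ≤ ENNReal.ofReal (ε / 2) * A := by
          rw [hG2, hH2]
          refine mul_le_mul' (ENNReal.ofReal_le_ofReal (hpsmall x ⟨hax, hxb⟩)) ?_
          exact lintegral_mono_set hJsub
  -- Step 2: pigeonhole for the potential term
  have hy : ∃ y ∈ K, ENNReal.ofReal (f y ^ 2) ≤ ENNReal.ofReal (1 / c) * B := by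
    by_cases hB : B = ⊤
    · refine ⟨x, hxK, ?_⟩
      rw [hB, ENNReal.mul_top ?_]
      · exact le_top
      · simp only [ne_eq, ENNReal.ofReal_eq_zero, not_le]
        positivity
    · have hwf2ae : AEStronglyMeasurable (fun t => w t * f t ^ 2)
          (volume.restrict (Icc a b)) :=
        (hwm.aemeasurable.mul (hfae.aemeasurable.pow_const 2)).aestronglyMeasurable
      have hnn : 0 ≤ᵐ[volume.restrict (Icc a b)] fun t => w t * f t ^ 2 := by
        filter_upwards [ae_restrict_of_ae hwpos, ae_restrict_mem measurableSet_Icc]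
          with t h1 h2
        exact mul_nonneg (h1 h2) (sq_nonneg _)
      have hint : IntegrableOn (fun t => w t * f t ^ 2) (Icc a b) :=
        (lintegral_ofReal_ne_top_iff_integrable hwf2ae hnn).mp hB
      set Q := ∫ t in Icc a b, w t * f t ^ 2 with hQdef
      have hBQ : B = ENNReal.ofReal Q :=
        (ofReal_integral_eq_lintegral_ofReal hint hnn).symm
      have hKcpt : IsCompact K := isCompact_Icc.inter_right isClosed_Icc
      obtain ⟨y, hyK, hymin⟩ := hKcpt.exists_isMinOn ⟨x, hxK⟩
        (((hfc.mono hKsub).pow 2) : ContinuousOn (fun z => f z ^ 2) K)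
      refine ⟨y, hyK, ?_⟩
      have key : f y ^ 2 * c ≤ Q := by
        have h1 : f y ^ 2 * c ≤ f y ^ 2 * ∫ t in K, w t :=
          mul_le_mul_of_nonneg_left (hwbig x ⟨hax, hxb⟩) (sq_nonneg _)
        have h2 : f y ^ 2 * ∫ t in K, w t = ∫ t in K, f y ^ 2 * w t :=
          (integral_const_mul _ _).symm
        have h3 : (∫ t in K, f y ^ 2 * w t) ≤ ∫ t in K, w t * f t ^ 2 := by
          refine integral_mono_ae ((hwint.mono_set hKsub).const_mul _)
            (hint.mono_set hKsub) ?_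
          filter_upwards [ae_restrict_of_ae hwpos, ae_restrict_mem hKmeas]
            with t h1' h2'
          calc f y ^ 2 * w t = w t * f y ^ 2 := mul_comm _ _
            _ ≤ w t * f t ^ 2 :=
              mul_le_mul_of_nonneg_left ((isMinOn_iff.mp hymin) t h2')
                (h1' (hKsub h2'))
        have h4 : (∫ t in K, w t * f t ^ 2) ≤ Q :=
          setIntegral_mono_set hint hnn (HasSubset.Subset.eventuallyLE hKsub)
        linarith
      rw [hBQ, ← ENNReal.ofReal_mul (by positivity : (0:ℝ) ≤ 1 / c)]
      refine ENNReal.ofReal_le_ofReal ?_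
      rw [one_div, inv_mul_eq_div]
      exact (le_div_iff₀ hc).mpr key
  obtain ⟨y, hyK, hyB⟩ := hy
  set r := ∫ t in J, |f' t| with hrdef
  have hr0 : 0 ≤ r := integral_nonneg fun t => abs_nonneg _
  have hyI : y ∈ Icc a b := hKsub hyK
  have hII : ∀ u v : ℝ, u ∈ Icc a b → v ∈ Icc a b → IntervalIntegrable f' volume u v :=
    fun u v hu hv => (hf'int.mono_set (uIcc_subset_Icc hu hv)).intervalIntegrable
  have hfx : f x = f y + ∫ t in y..x, f' t := by
    have h1 := hfeq x ⟨hax, hxb⟩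
    have h2 := hfeq y hyI
    have h3 := intervalIntegral.integral_add_adjacent_intervals
      (hII a y (left_mem_Icc.mpr hab.le) hyI) (hII y x hyI ⟨hax, hxb⟩)
    rw [h1, h2]
    linarith
  have hJuIcc : uIcc y x ⊆ J := by
    refine subset_inter (uIcc_subset_Icc hyI ⟨hax, hxb⟩) (uIcc_subset_Icc ?_ ?_)
    · exact ⟨by linarith [hyK.2.1], by linarith [hyK.2.2]⟩
    · exact ⟨by linarith, by linarith⟩
  have habs : |f x| ≤ |f y| + r := by
    rw [hfx]
    refine (abs_add_le _ _).trans (add_le_add_right ?_ _)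
    have h5 : |∫ t in y..x, f' t| ≤ ∫ t in uIoc y x, |f' t| := by
      simpa using intervalIntegral.norm_integral_le_integral_norm_uIoc
        (f := f') (a := y) (b := x) (μ := volume)
    refine h5.trans ?_
    refine setIntegral_mono_set ((hf'int.mono_set hJsub).abs)
      (Filter.Eventually.of_forall fun t => abs_nonneg _) ?_
    exact HasSubset.Subset.eventuallyLE (Set.Ioc_subset_Icc_self.trans hJuIcc)
  have hsq : |f x| ^ 2 ≤ 2 * f y ^ 2 + 2 * r ^ 2 := by
    nlinarith [abs_nonneg (f x), abs_nonneg (f y), sq_abs (f y),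
      sq_nonneg (|f y| - r)]
  have hofr : ENNReal.ofReal r ≤ ∫⁻ t in J, ENNReal.ofReal |f' t| :=
    le_of_eq (ofReal_integral_eq_lintegral_ofReal ((hf'int.mono_set hJsub).abs)
      (Filter.Eventually.of_forall fun t => abs_nonneg _))
  calc ENNReal.ofReal (|f x| ^ 2)
      ≤ ENNReal.ofReal (2 * f y ^ 2 + 2 * r ^ 2) := ENNReal.ofReal_le_ofReal hsq
    _ = 2 * ENNReal.ofReal (f y ^ 2) + 2 * ENNReal.ofReal (r ^ 2) := by
        rw [ENNReal.ofReal_add (by positivity) (by positivity),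
          ENNReal.ofReal_mul (by norm_num : (0:ℝ) ≤ 2),
          ENNReal.ofReal_mul (by norm_num : (0:ℝ) ≤ 2), ENNReal.ofReal_ofNat]
    _ ≤ 2 * (ENNReal.ofReal (1 / c) * B) + 2 * (ENNReal.ofReal (ε / 2) * A) := by
        have h1 : ENNReal.ofReal (r ^ 2) ≤ ENNReal.ofReal (ε / 2) * A := by
          rw [ENNReal.ofReal_pow hr0]
          exact (pow_le_pow_left' hofr 2).trans hCS
        exact add_le_add (mul_le_mul_right hyB 2) (mul_le_mul_right h1 2)
    _ = ENNReal.ofReal ε * A + ENNReal.ofReal (2 / c) * B := by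
        have e1 : (2:ℝ≥0∞) * ENNReal.ofReal (1 / c) = ENNReal.ofReal (2 / c) := by
          rw [← ENNReal.ofReal_ofNat 2, ← ENNReal.ofReal_mul (by norm_num)]
          congr 1
          ring
        have e2 : (2:ℝ≥0∞) * ENNReal.ofReal (ε / 2) = ENNReal.ofReal ε := by
          rw [← ENNReal.ofReal_ofNat 2, ← ENNReal.ofReal_mul (by norm_num)]
          ring_nf
        rw [← mul_assoc, ← mul_assoc, e1, e2, add_comm]
end

section
/- Let ε > 0, δ > 0 and c > 0 with 2δ ≤ b − a, and suppose that for every x ∈ [a,b]: ∫_{[a,b] ∩ [x−δ, x+δ]} (1/p(t)) dt ≤ ε/2 and ∫_{[a,b] ∩ [x−δ/2, x+δ/2]} w(t) dt ≥ c. Let q : [a,b] → ℝ be integrable and q_− := max(−q, 0). Then every absolutely continuous f : [a,b] → ℝ with derivative f' satisfies ∫_a^b q_−(x) f(x)² dx ≤ (∫_a^b q_−(t) dt) · ( ε ∫_a^b p(t) f'(t)² dt + (2/c) ∫_a^b w(t) f(t)² dt ). -/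
open MeasureTheory Set Filter

/-- Cauchy–Schwarz for nonnegative real functions. -/
lemma cs_aux {μ : Measure ℝ} {u v : ℝ → ℝ} (hu : AEMeasurable u μ) (hv : AEMeasurable v μ)
    (hu0 : 0 ≤ᵐ[μ] u) (hv0 : 0 ≤ᵐ[μ] v)
    (hu2 : Integrable (fun t => u t ^ 2) μ) (hv2 : Integrable (fun t => v t ^ 2) μ) :
    (∫ t, u t * v t ∂μ) ^ 2 ≤ (∫ t, u t ^ 2 ∂μ) * (∫ t, v t ^ 2 ∂μ) := by
  have hpq : (2 : ℝ).HolderConjugate 2 := Real.holderConjugate_iff.mpr ⟨one_lt_two, by norm_num⟩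
  have h2 : (ENNReal.ofReal (2 : ℝ)) = 2 := by norm_num
  have hmu : MemLp u (ENNReal.ofReal (2:ℝ)) μ := by
    rw [h2]; exact (memLp_two_iff_integrable_sq hu.aestronglyMeasurable).2 hu2
  have hmv : MemLp v (ENNReal.ofReal (2:ℝ)) μ := by
    rw [h2]; exact (memLp_two_iff_integrable_sq hv.aestronglyMeasurable).2 hv2
  have H := MeasureTheory.integral_mul_le_Lp_mul_Lq_of_nonneg hpq hu0 hv0 hmu hmv
  have hru : (fun a => u a ^ (2:ℝ)) = fun a => u a ^ 2 := by
    funext a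
    rw [show ((2:ℝ)) = ((2:ℕ):ℝ) by norm_num, Real.rpow_natCast]
  have hrv : (fun a => v a ^ (2:ℝ)) = fun a => v a ^ 2 := by
    funext a
    rw [show ((2:ℝ)) = ((2:ℕ):ℝ) by norm_num, Real.rpow_natCast]
  rw [hru, hrv] at H
  set X := ∫ t, u t ^ 2 ∂μ with hX
  set Y := ∫ t, v t ^ 2 ∂μ with hY
  have hX0 : 0 ≤ X := integral_nonneg fun t => sq_nonneg _
  have hY0 : 0 ≤ Y := integral_nonneg fun t => sq_nonneg _
  have huv0 : 0 ≤ ∫ t, u t * v t ∂μ := by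
    refine integral_nonneg_of_ae ?_
    filter_upwards [hu0, hv0] with t h1 h2 using mul_nonneg h1 h2
  have hsq : ∀ Z : ℝ, 0 ≤ Z → (Z ^ ((1:ℝ)/2)) ^ 2 = Z := by
    intro Z hZ
    rw [← Real.rpow_natCast (Z ^ ((1:ℝ)/2)) 2, ← Real.rpow_mul hZ]
    norm_num
  calc (∫ t, u t * v t ∂μ) ^ 2 ≤ (X ^ ((1:ℝ)/2) * Y ^ ((1:ℝ)/2)) ^ 2 := by
        apply pow_le_pow_left₀ huv0 H
    _ = X * Y := by rw [mul_pow, hsq X hX0, hsq Y hY0]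

/-- Single-edge version of the relative form-bound (4.8) of Lemma 4.4, with
`C_q = ∫_a^b q₋ dt`. The possibly infinite integrals are taken in `[0,∞]`. -/
theorem relative_form_bound (a b : ℝ) (hab : a < b)
    (p w : ℝ → ℝ) (hpm : Measurable p) (hwm : Measurable w)
    (hppos : ∀ᵐ x ∂volume, x ∈ Icc a b → 0 < p x)
    (hwpos : ∀ᵐ x ∂volume, x ∈ Icc a b → 0 ≤ w x)
    (hpint : IntegrableOn (fun t => 1 / p t) (Icc a b))
    (hwint : IntegrableOn w (Icc a b))
    (ε δ c : ℝ) (hε : 0 < ε) (hδ : 0 < δ) (hc : 0 < c) (hδab : 2 * δ ≤ b - a)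
    (hpsmall : ∀ x ∈ Icc a b,
      (∫ t in Icc a b ∩ Icc (x - δ) (x + δ), 1 / p t) ≤ ε / 2)
    (hwbig : ∀ x ∈ Icc a b,
      c ≤ ∫ t in Icc a b ∩ Icc (x - δ / 2) (x + δ / 2), w t)
    (q : ℝ → ℝ) (hqint : IntegrableOn q (Icc a b)) :
    ∀ f f' : ℝ → ℝ, ACDeriv a b f f' →
      (∫⁻ x in Icc a b, ENNReal.ofReal (max (-q x) 0 * f x ^ 2)) ≤
        ENNReal.ofReal (∫ t in a..b, max (-q t) 0) *
          (ENNReal.ofReal ε *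
              (∫⁻ t in Icc a b, ENNReal.ofReal (p t * f' t ^ 2)) +
            ENNReal.ofReal (2 / c) *
              (∫⁻ t in Icc a b, ENNReal.ofReal (w t * f t ^ 2))) := by
  intro f f' hf
  obtain ⟨hf'int, hfeq⟩ := hf
  -- notation
  set P : ENNReal := ∫⁻ t in Icc a b, ENNReal.ofReal (p t * f' t ^ 2) with hPdef
  set W : ENNReal := ∫⁻ t in Icc a b, ENNReal.ofReal (w t * f t ^ 2) with hWdef
  -- f is measurable on Icc a b
  have hfcont : ContinuousOn (fun x => f a + ∫ t in a..x, f' t) (Icc a b) := by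
    apply continuousOn_const.add
    have := intervalIntegral.continuousOn_primitive_interval (f := f') (a := a) (b := b) (μ := volume)
      (by rwa [uIcc_of_le hab.le])
    rwa [uIcc_of_le hab.le] at this
  have hfae : AEMeasurable f (volume.restrict (Icc a b)) := by
    have h1 : AEMeasurable (fun x => f a + ∫ t in a..x, f' t) (volume.restrict (Icc a b)) :=
      (hfcont.aemeasurable measurableSet_Icc)
    refine h1.congr ?_
    filter_upwards [ae_restrict_mem measurableSet_Icc] with x hx
    exact (hfeq x hx).symm
  have hppos' : ∀ᵐ t ∂(volume.restrict (Icc a b)), 0 < p t := by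
    filter_upwards [ae_restrict_of_ae hppos, ae_restrict_mem measurableSet_Icc] with t h1 h2
    exact h1 h2
  have hwpos' : ∀ᵐ t ∂(volume.restrict (Icc a b)), 0 ≤ w t := by
    filter_upwards [ae_restrict_of_ae hwpos, ae_restrict_mem measurableSet_Icc] with t h1 h2
    exact h1 h2
  have hpf2nn : 0 ≤ᵐ[volume.restrict (Icc a b)] fun t => p t * f' t ^ 2 := by
    filter_upwards [hppos'] with t ht using mul_nonneg ht.le (sq_nonneg _)
  have hwf2nn : 0 ≤ᵐ[volume.restrict (Icc a b)] fun t => w t * f t ^ 2 := by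
    filter_upwards [hwpos'] with t ht using mul_nonneg ht (sq_nonneg _)
  have hpinv_nn : 0 ≤ᵐ[volume.restrict (Icc a b)] fun t => 1 / p t := by
    filter_upwards [hppos'] with t ht using by positivity
  have hpf2ae : AEMeasurable (fun t => p t * f' t ^ 2) (volume.restrict (Icc a b)) := by
    have h := hf'int.aemeasurable
    exact hpm.aemeasurable.mul (h.pow_const 2)
  have hwf2ae : AEMeasurable (fun t => w t * f t ^ 2) (volume.restrict (Icc a b)) := by
    exact hwm.aemeasurable.mul (hfae.pow_const 2)
  -- the pointwise key bound
  have key : ∀ x ∈ Icc a b, ENNReal.ofReal (f x ^ 2) ≤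
      ENNReal.ofReal ε * P + ENNReal.ofReal (2 / c) * W := by
    intro x hx
    by_cases hPtop : P = ⊤
    · rw [hPtop, ENNReal.mul_top (ENNReal.ofReal_pos.2 hε).ne']
      simp
    by_cases hWtop : W = ⊤
    · rw [hWtop, ENNReal.mul_top (by
        simp only [ne_eq, ENNReal.ofReal_eq_zero, not_le]; positivity)]
      simp
    -- integrability of p f'² and w f² on Icc
    have hpf2 : IntegrableOn (fun t => p t * f' t ^ 2) (Icc a b) := by
      refine ⟨hpf2ae.aestronglyMeasurable, ?_⟩
      rw [hasFiniteIntegral_iff_ofReal hpf2nn]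
      exact lt_of_le_of_ne le_top hPtop
    have hwf2 : IntegrableOn (fun t => w t * f t ^ 2) (Icc a b) := by
      refine ⟨hwf2ae.aestronglyMeasurable, ?_⟩
      rw [hasFiniteIntegral_iff_ofReal hwf2nn]
      exact lt_of_le_of_ne le_top hWtop
    set Pr : ℝ := ∫ t in Icc a b, p t * f' t ^ 2 with hPrdef
    set Wr : ℝ := ∫ t in Icc a b, w t * f t ^ 2 with hWrdef
    have hPr : ENNReal.ofReal Pr = P := ofReal_integral_eq_lintegral_ofReal hpf2 hpf2nn
    have hWr : ENNReal.ofReal Wr = W := ofReal_integral_eq_lintegral_ofReal hwf2 hwf2nn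
    have hPr0 : 0 ≤ Pr := integral_nonneg_of_ae hpf2nn
    have hWr0 : 0 ≤ Wr := integral_nonneg_of_ae hwf2nn
    -- Step A : for y in J, f x ^ 2 ≤ 2 f y ^ 2 + ε Pr
    set J : Set ℝ := Icc a b ∩ Icc (x - δ / 2) (x + δ / 2) with hJdef
    have hJm : MeasurableSet J := measurableSet_Icc.inter measurableSet_Icc
    have hJsub : J ⊆ Icc a b := inter_subset_left
    have stepA : ∀ y ∈ J, f x ^ 2 ≤ 2 * f y ^ 2 + ε * Pr := by
      intro y hy
      have hyab : y ∈ Icc a b := hy.1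
      have hsub1 : uIcc y x ⊆ Icc a b := uIcc_subset_Icc hyab hx
      have hsub2 : uIcc y x ⊆ Icc a b ∩ Icc (x - δ) (x + δ) := by
        refine subset_inter hsub1 (uIcc_subset_Icc ?_ ?_)
        · constructor <;> [linarith [hy.2.1]; linarith [hy.2.2]]
        · constructor <;> linarith
      have hmsub2 : MeasurableSet (Icc a b ∩ Icc (x - δ) (x + δ)) :=
        measurableSet_Icc.inter measurableSet_Icc
      -- f x - f y is an interval integral
      have hIIax : IntervalIntegrable f' volume a x :=
        (hf'int.mono_set (uIcc_subset_Icc (left_mem_Icc.2 hab.le) hx)).intervalIntegrable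
      have hIIay : IntervalIntegrable f' volume a y :=
        (hf'int.mono_set (uIcc_subset_Icc (left_mem_Icc.2 hab.le) hyab)).intervalIntegrable
      have hdiff : f x - f y = ∫ t in y..x, f' t := by
        rw [hfeq x hx, hfeq y hyab]
        rw [add_sub_add_left_eq_sub]
        exact intervalIntegral.integral_interval_sub_left hIIax hIIay
      -- bound |∫ y..x f'| by the integral of |f'| over uIcc
      have habs : |∫ t in y..x, f' t| ≤ ∫ t in uIcc y x, |f' t| := by
        have h1 : |∫ t in y..x, f' t| ≤ ∫ t in uIoc y x, |f' t| := by
          simpa using intervalIntegral.norm_integral_le_integral_norm_uIoc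
            (f := f') (a := y) (b := x) (μ := volume)
        refine h1.trans (setIntegral_mono_set ((hf'int.mono_set hsub1).abs) ?_
          (HasSubset.Subset.eventuallyLE uIoc_subset_uIcc))
        exact Eventually.of_forall fun t => abs_nonneg _
      -- Cauchy–Schwarz on uIcc y x
      have hmuI : MeasurableSet (uIcc y x) := measurableSet_uIcc
      have hpposI : ∀ᵐ t ∂(volume.restrict (uIcc y x)), 0 < p t := by
        filter_upwards [ae_restrict_of_ae hppos, ae_restrict_mem hmuI] with t h1 h2
        exact h1 (hsub1 h2)
      have hf'I : IntegrableOn f' (uIcc y x) := hf'int.mono_set hsub1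
      have hCS : (∫ t in uIcc y x, |f' t|) ^ 2 ≤
          (∫ t in uIcc y x, 1 / p t) * (∫ t in uIcc y x, p t * f' t ^ 2) := by
        have hu : AEMeasurable (fun t => Real.sqrt (1 / p t))
            (volume.restrict (uIcc y x)) := ((measurable_const.div hpm).sqrt).aemeasurable
        have hv : AEMeasurable (fun t => Real.sqrt (p t) * |f' t|)
            (volume.restrict (uIcc y x)) :=
          (hpm.sqrt.aemeasurable.mul hf'I.abs.aemeasurable)
        have hu0 : 0 ≤ᵐ[volume.restrict (uIcc y x)] fun t => Real.sqrt (1 / p t) :=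
          Eventually.of_forall fun t => Real.sqrt_nonneg _
        have hv0 : 0 ≤ᵐ[volume.restrict (uIcc y x)] fun t => Real.sqrt (p t) * |f' t| :=
          Eventually.of_forall fun t => mul_nonneg (Real.sqrt_nonneg _) (abs_nonneg _)
        have hu2eq : (fun t => Real.sqrt (1 / p t) ^ 2) =ᵐ[volume.restrict (uIcc y x)]
            fun t => 1 / p t := by
          filter_upwards [hpposI] with t ht
          rw [Real.sq_sqrt (by positivity)]
        have hv2eq : (fun t => (Real.sqrt (p t) * |f' t|) ^ 2) =ᵐ[volume.restrict (uIcc y x)]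
            fun t => p t * f' t ^ 2 := by
          filter_upwards [hpposI] with t ht
          rw [mul_pow, Real.sq_sqrt ht.le, sq_abs]
        have huv : (fun t => Real.sqrt (1 / p t) * (Real.sqrt (p t) * |f' t|))
            =ᵐ[volume.restrict (uIcc y x)] fun t => |f' t| := by
          filter_upwards [hpposI] with t ht
          rw [← mul_assoc, ← Real.sqrt_mul (by positivity), one_div,
            inv_mul_cancel₀ ht.ne', Real.sqrt_one, one_mul]
        have hu2 : Integrable (fun t => Real.sqrt (1 / p t) ^ 2)
            (volume.restrict (uIcc y x)) :=
          ((hpint.mono_set hsub1)).congr hu2eq.symm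
        have hv2 : Integrable (fun t => (Real.sqrt (p t) * |f' t|) ^ 2)
            (volume.restrict (uIcc y x)) :=
          ((hpf2.mono_set hsub1)).congr hv2eq.symm
        have H := cs_aux hu hv hu0 hv0 hu2 hv2
        rwa [integral_congr_ae huv, integral_congr_ae hu2eq, integral_congr_ae hv2eq] at H
      -- bound the two factors
      have hfac1 : (∫ t in uIcc y x, 1 / p t) ≤ ε / 2 := by
        refine le_trans (setIntegral_mono_set (hpint.mono_set inter_subset_left) ?_
          (HasSubset.Subset.eventuallyLE hsub2)) (hpsmall x hx)
        filter_upwards [ae_restrict_of_ae hppos, ae_restrict_mem hmsub2] with t h1 h2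
        have := h1 (h2.1); positivity
      have hfac2 : (∫ t in uIcc y x, p t * f' t ^ 2) ≤ Pr := by
        refine setIntegral_mono_set hpf2 hpf2nn (HasSubset.Subset.eventuallyLE hsub1)
      have hfac1' : 0 ≤ ∫ t in uIcc y x, 1 / p t := by
        refine integral_nonneg_of_ae ?_
        filter_upwards [hpposI] with t ht using by positivity
      have hfac2' : 0 ≤ ∫ t in uIcc y x, p t * f' t ^ 2 := by
        refine integral_nonneg_of_ae ?_
        filter_upwards [hpposI] with t ht using mul_nonneg ht.le (sq_nonneg _)
      have hCS2 : (f x - f y) ^ 2 ≤ ε / 2 * Pr := by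
        rw [hdiff]
        calc (∫ t in y..x, f' t) ^ 2 = |∫ t in y..x, f' t| ^ 2 := (sq_abs _).symm
          _ ≤ (∫ t in uIcc y x, |f' t|) ^ 2 := by
              apply pow_le_pow_left₀ (abs_nonneg _) habs
          _ ≤ (∫ t in uIcc y x, 1 / p t) * (∫ t in uIcc y x, p t * f' t ^ 2) := hCS
          _ ≤ ε / 2 * Pr := mul_le_mul hfac1 hfac2 hfac2' (by linarith)
      nlinarith [sq_nonneg (f x - 2 * f y), hCS2]
    -- Step B : integrate over J against w
    have hwJ : IntegrableOn w J := hwint.mono_set hJsub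
    have hwf2J : IntegrableOn (fun t => w t * f t ^ 2) J := hwf2.mono_set hJsub
    have hwposJ : ∀ᵐ t ∂(volume.restrict J), 0 ≤ w t := by
      filter_upwards [ae_restrict_of_ae hwpos, ae_restrict_mem hJm] with t h1 h2
      exact h1 (hJsub h2)
    have hintmono : ∫ t in J, w t * f x ^ 2 ≤
        ∫ t in J, (2 * (w t * f t ^ 2) + ε * Pr * w t) := by
      refine setIntegral_mono_ae_restrict (hwJ.mul_const _)
        ((hwf2J.const_mul 2).add (hwJ.const_mul (ε * Pr))) ?_
      filter_upwards [hwposJ, ae_restrict_mem hJm] with t hw ht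
      have := stepA t ht
      nlinarith
    have hLHS : ∫ t in J, w t * f x ^ 2 = (∫ t in J, w t) * f x ^ 2 :=
      integral_mul_const _ _
    have hRHS : ∫ t in J, (2 * (w t * f t ^ 2) + ε * Pr * w t) =
        2 * (∫ t in J, w t * f t ^ 2) + ε * Pr * (∫ t in J, w t) := by
      rw [integral_add (hwf2J.const_mul 2) (hwJ.const_mul (ε * Pr)),
        integral_const_mul, integral_const_mul]
    set S : ℝ := ∫ t in J, w t with hSdef
    set A : ℝ := ∫ t in J, w t * f t ^ 2 with hAdef
    have hcS : c ≤ S := hwbig x hx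
    have hA0 : 0 ≤ A := by
      refine integral_nonneg_of_ae ?_
      filter_upwards [hwposJ, ae_restrict_mem hJm] with t hw ht
      exact mul_nonneg hw (sq_nonneg _)
    have hAW : A ≤ Wr :=
      setIntegral_mono_set hwf2 hwf2nn (HasSubset.Subset.eventuallyLE hJsub)
    have hmain : S * f x ^ 2 ≤ 2 * A + ε * Pr * S := by
      have h := hintmono
      rw [hLHS, hRHS] at h
      linarith
    -- conclude the real inequality
    have hreal : f x ^ 2 ≤ ε * Pr + 2 / c * Wr := by
      by_cases hcase : f x ^ 2 ≤ ε * Pr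
      · have : 0 ≤ 2 / c * Wr := by positivity
        linarith
      · push_neg at hcase
        have h1 : (f x ^ 2 - ε * Pr) * c ≤ (f x ^ 2 - ε * Pr) * S :=
          mul_le_mul_of_nonneg_left hcS (by linarith)
        have h2 : (f x ^ 2 - ε * Pr) * S ≤ 2 * A := by nlinarith
        have h3 : (f x ^ 2 - ε * Pr) * c ≤ 2 * Wr := by linarith
        have h4 : f x ^ 2 - ε * Pr ≤ 2 * Wr / c := (le_div_iff₀ hc).2 h3
        have h5 : 2 / c * Wr = 2 * Wr / c := by ring
        linarith [h4, h5.ge, h5.le]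
    calc ENNReal.ofReal (f x ^ 2) ≤ ENNReal.ofReal (ε * Pr + 2 / c * Wr) :=
          ENNReal.ofReal_le_ofReal hreal
      _ = ENNReal.ofReal ε * ENNReal.ofReal Pr +
          ENNReal.ofReal (2 / c) * ENNReal.ofReal Wr := by
          rw [ENNReal.ofReal_add (by positivity) (by positivity),
            ENNReal.ofReal_mul hε.le, ENNReal.ofReal_mul (by positivity)]
      _ = ENNReal.ofReal ε * P + ENNReal.ofReal (2 / c) * W := by rw [hPr, hWr]
  -- now integrate the key bound against q₋
  set C : ENNReal := ENNReal.ofReal ε * P + ENNReal.ofReal (2 / c) * W with hCdef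
  have hq1 : (∫⁻ x in Icc a b, ENNReal.ofReal (max (-q x) 0 * f x ^ 2)) ≤
      ∫⁻ x in Icc a b, ENNReal.ofReal (max (-q x) 0) * C := by
    refine lintegral_mono_ae ?_
    filter_upwards [ae_restrict_mem measurableSet_Icc] with x hx
    rw [ENNReal.ofReal_mul (le_max_right (-q x) 0)]
    exact mul_le_mul_right (key x hx) _
  have hqae : AEMeasurable (fun x => ENNReal.ofReal (max (-q x) 0))
      (volume.restrict (Icc a b)) :=
    (hqint.aemeasurable.neg.max aemeasurable_const).ennreal_ofReal
  have hq2 : (∫⁻ x in Icc a b, ENNReal.ofReal (max (-q x) 0) * C) =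
      (∫⁻ x in Icc a b, ENNReal.ofReal (max (-q x) 0)) * C :=
    lintegral_mul_const'' C hqae
  have hqneg : IntegrableOn (fun x => max (-q x) 0) (Icc a b) := hqint.neg.pos_part
  have hq3 : (∫⁻ x in Icc a b, ENNReal.ofReal (max (-q x) 0)) =
      ENNReal.ofReal (∫ t in a..b, max (-q t) 0) := by
    rw [intervalIntegral.integral_of_le hab.le, ← integral_Icc_eq_integral_Ioc]
    exact (ofReal_integral_eq_lintegral_ofReal hqneg
      (Eventually.of_forall fun x => le_max_right _ _)).symm
  calc (∫⁻ x in Icc a b, ENNReal.ofReal (max (-q x) 0 * f x ^ 2))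
      ≤ ∫⁻ x in Icc a b, ENNReal.ofReal (max (-q x) 0) * C := hq1
    _ = (∫⁻ x in Icc a b, ENNReal.ofReal (max (-q x) 0)) * C := hq2
    _ = ENNReal.ofReal (∫ t in a..b, max (-q t) 0) * C := by rw [hq3]
end

section
/- Let ε > 0, δ > 0 and c > 0 with 2δ ≤ b − a, and suppose that for every x ∈ [a,b]: ∫_{[a,b] ∩ [x−δ, x+δ]} (1/p(t)) dt ≤ ε/2 and ∫_{[a,b] ∩ [x−δ/2, x+δ/2]} w(t) dt ≥ c. Let q : [a,b] → ℝ be integrable with q_− := max(−q, 0), and assume ε · ∫_a^b q_−(t) dt ≤ 1. Then for every absolutely continuous f : [a,b] → ℝ with derivative f' such that ∫_a^b p f'² dt < ∞ and ∫_a^b w f² dt < ∞, the Sturm–Liouville quadratic form is lower semibounded: ∫_a^b ( p(x) f'(x)² + q(x) f(x)² ) dx ≥ − (2/c) (∫_a^b q_−(t) dt) ∫_a^b w(x) f(x)² dx. -/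
open MeasureTheory Set

/-- Cauchy–Schwarz-type inequality via AM–GM. -/
lemma sq_integral_sqrt_mul_le {α : Type*} [MeasurableSpace α] (μ : Measure α) (g h : α → ℝ)
    (hg : Integrable g μ) (hh : Integrable h μ)
    (hg0 : 0 ≤ᵐ[μ] g) (hh0 : 0 ≤ᵐ[μ] h) :
    (∫ x, Real.sqrt (g x * h x) ∂μ) ^ 2 ≤ (∫ x, g x ∂μ) * ∫ x, h x ∂μ := by
  set A := ∫ x, g x ∂μ with hA
  set B := ∫ x, h x ∂μ with hB
  have hA0 : 0 ≤ A := integral_nonneg_of_ae hg0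
  have hB0 : 0 ≤ B := integral_nonneg_of_ae hh0
  have hsm : AEStronglyMeasurable (fun x => Real.sqrt (g x * h x)) μ :=
    (Real.continuous_sqrt.comp_aestronglyMeasurable
      (hg.aestronglyMeasurable.mul hh.aestronglyMeasurable))
  have hint : Integrable (fun x => Real.sqrt (g x * h x)) μ := by
    refine Integrable.mono' ((hg.add hh).div_const 2) hsm ?_
    filter_upwards [hg0, hh0] with x hgx hhx
    have hgx' : (0:ℝ) ≤ g x := hgx
    have hhx' : (0:ℝ) ≤ h x := hhx
    have h1 : Real.sqrt (g x * h x) = Real.sqrt (g x) * Real.sqrt (h x) :=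
      Real.sqrt_mul hgx' _
    have h2 : Real.sqrt (g x) ^ 2 = g x := Real.sq_sqrt hgx'
    have h3 : Real.sqrt (h x) ^ 2 = h x := Real.sq_sqrt hhx'
    rw [Real.norm_eq_abs, abs_of_nonneg (Real.sqrt_nonneg _), h1]
    simp only [Pi.add_apply]
    nlinarith [sq_nonneg (Real.sqrt (g x) - Real.sqrt (h x))]
  have hL0 : 0 ≤ ∫ x, Real.sqrt (g x * h x) ∂μ :=
    integral_nonneg fun x => Real.sqrt_nonneg _
  -- degenerate cases
  rcases eq_or_lt_of_le hA0 with hA' | hApos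
  · have hgz : g =ᵐ[μ] 0 := (integral_eq_zero_iff_of_nonneg_ae hg0 hg).mp hA'.symm
    have hz : (fun x => Real.sqrt (g x * h x)) =ᵐ[μ] 0 := by
      filter_upwards [hgz] with x hx
      have hx' : g x = 0 := hx
      simp [hx']
    rw [integral_congr_ae hz]
    simpa using mul_nonneg hA0 hB0
  rcases eq_or_lt_of_le hB0 with hB' | hBpos
  · have hhz : h =ᵐ[μ] 0 := (integral_eq_zero_iff_of_nonneg_ae hh0 hh).mp hB'.symm
    have hz : (fun x => Real.sqrt (g x * h x)) =ᵐ[μ] 0 := by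
      filter_upwards [hhz] with x hx
      have hx' : h x = 0 := hx
      simp [hx']
    rw [integral_congr_ae hz]
    simpa using mul_nonneg hA0 hB0
  -- main case : choose l = √B/√A
  set l : ℝ := Real.sqrt B / Real.sqrt A with hl
  have hsA : 0 < Real.sqrt A := Real.sqrt_pos.mpr hApos
  have hsB : 0 < Real.sqrt B := Real.sqrt_pos.mpr hBpos
  have hlpos : 0 < l := div_pos hsB hsA
  have hln : l ≠ 0 := ne_of_gt hlpos
  have hpt : ∀ᵐ x ∂μ, Real.sqrt (g x * h x) ≤ (l * g x + h x / l) / 2 := by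
    filter_upwards [hg0, hh0] with x hgx hhx
    have hgx' : (0:ℝ) ≤ g x := hgx
    have hhx' : (0:ℝ) ≤ h x := hhx
    have h1 : Real.sqrt (g x * h x) = Real.sqrt (g x) * Real.sqrt (h x) :=
      Real.sqrt_mul hgx' _
    have h2 : Real.sqrt (g x) ^ 2 = g x := Real.sq_sqrt hgx'
    have h3 : Real.sqrt (h x) ^ 2 = h x := Real.sq_sqrt hhx'
    have key : 2 * (Real.sqrt (g x) * Real.sqrt (h x)) * l ≤ l * l * g x + h x := by
      nlinarith [sq_nonneg (l * Real.sqrt (g x) - Real.sqrt (h x))]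
    have h4 : (2 * (Real.sqrt (g x) * Real.sqrt (h x)) * l) / l ≤ (l * l * g x + h x) / l :=
      (div_le_div_iff_of_pos_right hlpos).mpr key
    have e1 : (2 * (Real.sqrt (g x) * Real.sqrt (h x)) * l) / l
        = Real.sqrt (g x) * Real.sqrt (h x) * 2 := by
      field_simp
    have e2 : (l * l * g x + h x) / l = l * g x + h x / l := by
      field_simp
    rw [h1]
    rw [e1, e2] at h4
    linarith
  have hb2 : Integrable (fun x => (l * g x + h x / l) / 2) μ :=
    ((hg.const_mul l).add (hh.div_const l)).div_const 2
  have hle : (∫ x, Real.sqrt (g x * h x) ∂μ) ≤ (l * A + B / l) / 2 := by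
    have hmono := integral_mono_ae hint hb2 hpt
    have heq : (∫ x, (l * g x + h x / l) / 2 ∂μ) = (l * A + B / l) / 2 := by
      rw [integral_div, integral_add (hg.const_mul l) (hh.div_const l),
        integral_const_mul, integral_div]
    rwa [heq] at hmono
  have heval : (l * A + B / l) / 2 = Real.sqrt A * Real.sqrt B := by
    have eA : Real.sqrt A * Real.sqrt A = A := Real.mul_self_sqrt hA0
    have eB : Real.sqrt B * Real.sqrt B = B := Real.mul_self_sqrt hB0
    rw [hl]
    field_simp
    nlinarith [eA, eB]
  calc (∫ x, Real.sqrt (g x * h x) ∂μ) ^ 2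
      ≤ (Real.sqrt A * Real.sqrt B) ^ 2 :=
        pow_le_pow_left₀ hL0 (hle.trans_eq heval) 2
    _ = A * B := by rw [mul_pow, Real.sq_sqrt hA0, Real.sq_sqrt hB0]

set_option maxHeartbeats 1000000 in
/-- Single-edge version of the lower semiboundedness conclusion of Lemma 4.4. -/
theorem form_lower_semibounded (a b : ℝ) (hab : a < b)
    (p w : ℝ → ℝ) (hpm : Measurable p) (hwm : Measurable w)
    (hppos : ∀ᵐ x ∂volume, x ∈ Icc a b → 0 < p x)
    (hwpos : ∀ᵐ x ∂volume, x ∈ Icc a b → 0 ≤ w x)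
    (hpint : IntegrableOn (fun t => 1 / p t) (Icc a b))
    (hwint : IntegrableOn w (Icc a b))
    (ε δ c : ℝ) (hε : 0 < ε) (hδ : 0 < δ) (hc : 0 < c) (hδab : 2 * δ ≤ b - a)
    (hpsmall : ∀ x ∈ Icc a b,
      (∫ t in Icc a b ∩ Icc (x - δ) (x + δ), 1 / p t) ≤ ε / 2)
    (hwbig : ∀ x ∈ Icc a b,
      c ≤ ∫ t in Icc a b ∩ Icc (x - δ / 2) (x + δ / 2), w t)
    (q : ℝ → ℝ) (hqint : IntegrableOn q (Icc a b))
    (hεq : ε * (∫ t in a..b, max (-q t) 0) ≤ 1) :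
    ∀ f f' : ℝ → ℝ, ACDeriv a b f f' →
      IntegrableOn (fun t => p t * f' t ^ 2) (Icc a b) →
      IntegrableOn (fun t => w t * f t ^ 2) (Icc a b) →
      (∫ x in a..b, (p x * f' x ^ 2 + q x * f x ^ 2)) ≥
        -(2 / c) * (∫ t in a..b, max (-q t) 0) * ∫ x in a..b, w x * f x ^ 2 := by
  intro f f' hAC hPint hWint
  obtain ⟨hf'int, hfeq⟩ := hAC
  have hab' : a ≤ b := hab.le
  set P := ∫ t in Icc a b, p t * f' t ^ 2 with hPdef
  set W := ∫ t in Icc a b, w t * f t ^ 2 with hWdef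
  set Q := ∫ t in Icc a b, max (-q t) 0 with hQdef
  have hQeq : (∫ t in a..b, max (-q t) 0) = Q := by
    rw [intervalIntegral.integral_of_le hab', hQdef, integral_Icc_eq_integral_Ioc]
  have hWeq : (∫ x in a..b, w x * f x ^ 2) = W := by
    rw [intervalIntegral.integral_of_le hab', hWdef, integral_Icc_eq_integral_Ioc]
  have hpae : ∀ᵐ x ∂(volume.restrict (Icc a b)), 0 < p x :=
    (ae_restrict_iff' measurableSet_Icc).2 hppos
  have hwae : ∀ᵐ x ∂(volume.restrict (Icc a b)), 0 ≤ w x :=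
    (ae_restrict_iff' measurableSet_Icc).2 hwpos
  have hpf2ae : ∀ᵐ x ∂(volume.restrict (Icc a b)), 0 ≤ p x * f' x ^ 2 :=
    hpae.mono fun x hx => mul_nonneg hx.le (sq_nonneg _)
  have hwf2ae : ∀ᵐ x ∂(volume.restrict (Icc a b)), 0 ≤ w x * f x ^ 2 :=
    hwae.mono fun x hx => mul_nonneg hx (sq_nonneg _)
  have hP0 : 0 ≤ P := integral_nonneg_of_ae hpf2ae
  have hW0 : 0 ≤ W := integral_nonneg_of_ae hwf2ae
  have hQ0 : 0 ≤ Q := integral_nonneg fun x => le_max_right _ _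
  have hεQ : ε * Q ≤ 1 := by rwa [hQeq] at hεq
  set M := 2 / c * W + ε * P with hMdef
  have hM0 : 0 ≤ M := by positivity
  -- continuity of f on [a,b]
  have hfc : ContinuousOn f (Icc a b) := by
    have h1 : ContinuousOn (fun x => f a + ∫ t in Ioc a x, f' t) (Icc a b) :=
      continuousOn_const.add (intervalIntegral.continuousOn_primitive hf'int)
    refine h1.congr fun x hx => ?_
    rw [hfeq x hx, intervalIntegral.integral_of_le hx.1]
  -- the key pointwise bound
  have hfbound : ∀ x ∈ Icc a b, f x ^ 2 ≤ M := by
    intro x hx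
    set S := Icc a b ∩ Icc (x - δ) (x + δ) with hSdef
    set I := Icc a b ∩ Icc (x - δ / 2) (x + δ / 2) with hIdef
    have hSsub : S ⊆ Icc a b := inter_subset_left
    have hIsub : I ⊆ Icc a b := inter_subset_left
    have hpS : IntegrableOn (fun t => 1 / p t) S := hpint.mono_set hSsub
    have hpfS : IntegrableOn (fun t => p t * f' t ^ 2) S := hPint.mono_set hSsub
    have hpaeS : ∀ᵐ t ∂(volume.restrict S), 0 < p t :=
      ae_restrict_of_ae_restrict_of_subset hSsub hpae
    -- Cauchy-Schwarz
    have hCSmain : (∫ t in S, |f' t|) ^ 2 ≤ (∫ t in S, 1 / p t) * ∫ t in S, p t * f' t ^ 2 := by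
      have hcs := sq_integral_sqrt_mul_le (volume.restrict S) (fun t => 1 / p t)
        (fun t => p t * f' t ^ 2) hpS hpfS
        (hpaeS.mono fun t ht => by positivity)
        (hpaeS.mono fun t ht => mul_nonneg ht.le (sq_nonneg _))
      refine le_trans (le_of_eq ?_) hcs
      congr 1
      refine integral_congr_ae (hpaeS.mono fun t ht => ?_)
      have h5 : 1 / p t * (p t * f' t ^ 2) = f' t ^ 2 := by field_simp
      show |f' t| = Real.sqrt (1 / p t * (p t * f' t ^ 2))
      rw [h5, Real.sqrt_sq_eq_abs]
    have hS1 : (∫ t in S, 1 / p t) ≤ ε / 2 := hpsmall x hx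
    have hS2 : (∫ t in S, p t * f' t ^ 2) ≤ P :=
      setIntegral_mono_set hPint hpf2ae hSsub.eventuallyLE
    have hS2' : 0 ≤ ∫ t in S, p t * f' t ^ 2 :=
      integral_nonneg_of_ae (ae_restrict_of_ae_restrict_of_subset hSsub hpf2ae)
    have hCS : (∫ t in S, |f' t|) ^ 2 ≤ ε / 2 * P := by
      calc (∫ t in S, |f' t|) ^ 2 ≤ (∫ t in S, 1 / p t) * ∫ t in S, p t * f' t ^ 2 := hCSmain
        _ ≤ ε / 2 * P := by
            apply mul_le_mul hS1 hS2 hS2' (by linarith)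
    -- difference bound
    have hdiff : ∀ y ∈ Icc a b, |x - y| ≤ δ → (f x - f y) ^ 2 ≤ ε / 2 * P := by
      intro y hy hxy
      obtain ⟨hxy1, hxy2⟩ := abs_le.mp hxy
      have hsub2 : uIcc y x ⊆ S := by
        rw [uIcc]
        intro t ht
        refine ⟨⟨?_, ?_⟩, ?_, ?_⟩
        · exact le_trans (le_min hy.1 hx.1) ht.1
        · exact le_trans ht.2 (max_le hy.2 hx.2)
        · exact le_trans (le_min (by linarith) (by linarith)) ht.1
        · exact le_trans ht.2 (max_le (by linarith) (by linarith))
      have huIccsub : ∀ z ∈ Icc a b, uIcc a z ⊆ Icc a b := fun z hz => by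
        rw [uIcc_of_le hz.1]; exact Icc_subset_Icc le_rfl hz.2
      have hiy : IntervalIntegrable f' volume a y :=
        (hf'int.mono_set (huIccsub y hy)).intervalIntegrable
      have hix : IntervalIntegrable f' volume a x :=
        (hf'int.mono_set (huIccsub x hx)).intervalIntegrable
      have heq : f x - f y = ∫ t in y..x, f' t := by
        rw [hfeq x hx, hfeq y hy]
        rw [add_sub_add_left_eq_sub]
        exact intervalIntegral.integral_interval_sub_left hix hiy
      have habs : |f x - f y| ≤ ∫ t in S, |f' t| := by
        rw [heq]
        have h1 : |∫ t in y..x, f' t| ≤ ∫ t in uIoc y x, |f' t| := by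
          simpa [Real.norm_eq_abs] using
            intervalIntegral.norm_integral_le_integral_norm_uIoc (f := f') (μ := volume)
              (a := y) (b := x)
        refine h1.trans ?_
        refine setIntegral_mono_set ((hf'int.mono_set hSsub).abs) ?_ ?_
        · exact Filter.Eventually.of_forall fun t => abs_nonneg _
        · exact ((Set.uIoc_subset_uIcc (a := y) (b := x)).trans hsub2).eventuallyLE
      have h2 : (f x - f y) ^ 2 ≤ (∫ t in S, |f' t|) ^ 2 := by
        rw [← sq_abs (f x - f y)]
        exact pow_le_pow_left₀ (abs_nonneg _) habs 2
      exact h2.trans hCS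
    -- averaging over I
    have hwI : IntegrableOn w I := hwint.mono_set hIsub
    have hwfI : IntegrableOn (fun t => w t * f t ^ 2) I := hWint.mono_set hIsub
    have hwaeI : ∀ᵐ t ∂(volume.restrict I), 0 ≤ w t :=
      ae_restrict_of_ae_restrict_of_subset hIsub hwae
    set V := ∫ t in I, w t with hVdef
    have hV : c ≤ V := hwbig x hx
    have hfx2 : ∀ y ∈ I, f x ^ 2 ≤ 2 * f y ^ 2 + ε * P := by
      intro y hy
      have h1 : (f x - f y) ^ 2 ≤ ε / 2 * P := by
        refine hdiff y hy.1 (abs_le.2 ⟨?_, ?_⟩)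
        · have := hy.2.2; linarith
        · have := hy.2.1; linarith
      nlinarith [sq_nonneg (2 * f y - f x)]
    have hImeas : MeasurableSet I := measurableSet_Icc.inter measurableSet_Icc
    have hIae : ∀ᵐ t ∂(volume.restrict I), t ∈ I := ae_restrict_mem hImeas
    have hRHSint : Integrable (fun y => 2 * (w y * f y ^ 2) + ε * P * w y)
        (volume.restrict I) := (hwfI.const_mul 2).add (hwI.const_mul (ε * P))
    have hmono : (∫ y in I, w y * f x ^ 2) ≤
        ∫ y in I, (2 * (w y * f y ^ 2) + ε * P * w y) := by
      refine integral_mono_ae (hwI.mul_const _) hRHSint ?_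
      filter_upwards [hwaeI, hIae] with y hwy hyI
      have h1 := hfx2 y hyI
      nlinarith [mul_le_mul_of_nonneg_left h1 hwy]
    have hIsplit : (∫ y in I, (2 * (w y * f y ^ 2) + ε * P * w y)) =
        2 * (∫ y in I, w y * f y ^ 2) + ε * P * V := by
      rw [integral_add (hwfI.const_mul 2) (hwI.const_mul (ε * P)),
        integral_const_mul, integral_const_mul]
    have hVfx : V * f x ^ 2 ≤ 2 * (∫ y in I, w y * f y ^ 2) + ε * P * V := by
      have := hmono
      rwa [integral_mul_const, hIsplit] at this
    have hIW : (∫ y in I, w y * f y ^ 2) ≤ W :=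
      setIntegral_mono_set hWint hwf2ae hIsub.eventuallyLE
    by_contra hcon
    push_neg at hcon
    rw [hMdef] at hcon
    have hcW : 0 ≤ 2 / c * W := by positivity
    have h6 : 0 < f x ^ 2 - ε * P := by linarith
    have h7 : c * (f x ^ 2 - ε * P) ≤ V * (f x ^ 2 - ε * P) :=
      mul_le_mul_of_nonneg_right hV h6.le
    have h8 : c * (2 / c * W) = 2 * W := by field_simp
    have h9 : V * (f x ^ 2 - ε * P) ≤ 2 * W := by linarith [hVfx, hIW]
    have h10 : c * (f x ^ 2 - ε * P) ≤ 2 * W := le_trans h7 h9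
    have h11 : c * (2 / c * W) < c * (f x ^ 2 - ε * P) := by
      apply mul_lt_mul_of_pos_left _ hc
      linarith
    linarith
  -- integrability of q f²
  have hfmeas : AEMeasurable f (volume.restrict (Icc a b)) :=
    hfc.aemeasurable measurableSet_Icc
  have hqf2sm : AEStronglyMeasurable (fun t => q t * f t ^ 2) (volume.restrict (Icc a b)) :=
    (hqint.aestronglyMeasurable.aemeasurable.mul (hfmeas.pow_const 2)).aestronglyMeasurable
  have hIccae : ∀ᵐ t ∂(volume.restrict (Icc a b)), t ∈ Icc a b :=
    ae_restrict_mem measurableSet_Icc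
  have hqf2int : IntegrableOn (fun t => q t * f t ^ 2) (Icc a b) := by
    refine Integrable.mono' (hqint.abs.mul_const M) hqf2sm ?_
    filter_upwards [hIccae] with t ht
    have h1 : f t ^ 2 ≤ M := hfbound t ht
    rw [Real.norm_eq_abs, abs_mul, abs_of_nonneg (sq_nonneg (f t))]
    exact mul_le_mul_of_nonneg_left h1 (abs_nonneg _)
  have hqmint : Integrable (fun t => max (-q t) 0) (volume.restrict (Icc a b)) :=
    hqint.neg.pos_part
  have hqf2low : (∫ t in Icc a b, q t * f t ^ 2) ≥ -(Q * M) := by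
    have h1 : (∫ t in Icc a b, -(max (-q t) 0 * M)) ≤ ∫ t in Icc a b, q t * f t ^ 2 := by
      refine integral_mono_ae ((hqmint.mul_const M).neg) hqf2int ?_
      filter_upwards [hIccae] with t ht
      have h2 : f t ^ 2 ≤ M := hfbound t ht
      have h3 : -q t ≤ max (-q t) 0 := le_max_left _ _
      have h4 : (0:ℝ) ≤ max (-q t) 0 := le_max_right _ _
      nlinarith [mul_nonneg (by linarith : (0:ℝ) ≤ q t + max (-q t) 0) (sq_nonneg (f t)),
        mul_nonneg h4 (by linarith : (0:ℝ) ≤ M - f t ^ 2)]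
    have h5 : (∫ t in Icc a b, -(max (-q t) 0 * M)) = -(Q * M) := by
      rw [integral_neg, integral_mul_const]
    linarith [h5 ▸ h1]
  -- final assembly
  rw [hQeq, hWeq, intervalIntegral.integral_of_le hab', ← integral_Icc_eq_integral_Ioc]
  have hsplit : (∫ x in Icc a b, (p x * f' x ^ 2 + q x * f x ^ 2)) =
      P + ∫ x in Icc a b, q x * f x ^ 2 := integral_add hPint hqf2int
  rw [hsplit, ge_iff_le]
  have hMQ : Q * M = 2 / c * W * Q + ε * P * Q := by rw [hMdef]; ring
  have hre : -(2 / c) * Q * W = -(2 / c * W * Q) := by ring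
  have hPQ : ε * P * Q ≤ P := by
    have h := mul_le_mul_of_nonneg_left hεQ hP0
    rw [mul_one] at h
    linarith [h]
  rw [hMQ] at hqf2low
  linarith [hqf2low, hre, hPQ]
end
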